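/- arXiv:2312.16536 — 4 statements merged into one kernel-verified Lean document; each statement's English description precedes it below -/
import Mathlib

section
/- Let α > 1/2 and let H_α be the Struve function. Then H_α(x) ≍ min{x^{α+1}, x^{α-1}} for all x > 0, i.e., there exist constants c, C > 0 such that c min{x^{α+1}, x^{α-1}} ≤ H_α(x) ≤ C min{x^{α+1}, x^{α-1}} for every x > 0. -/
/-!
Put `β = α - 1/2` and `w t = 2 β t (1 - t²)^(β - 1) = -d/dt (1 - t²)^β` on `(0, 1)`. Expanding
`1 - cos (x t)` in powers of `x t` and integrating termwise against the Beta moments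
`∫ w t t^(2n) = Γ(n+1) Γ(β+1) / Γ(n+1+β)`, Legendre's duplication formula turns the result into
the Struve series, so that `H_α x = x^(α-1) G x / (2^(α+1) √π Γ(α+1/2) / 4)` with
`G x = ∫₀¹ w t (1 - cos (x t)) dt`. It remains to see `G x ≍ min 1 (x²)`, which holds for any
positive integrable weight on `(0, 1)`: the upper bound comes from `1 - cos y ≤ min 2 (y²/2)`,
the lower bound from `1 - cos y ≥ 2 y² / π²` when `x ≤ 1`, and for `x ≥ 1` from positivity and
continuity of `G` together with the Riemann–Lebesgue lemma `G x → ∫ w`.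
-/

open Set
open scoped ENNReal

/-- The series appearing in the definition of the Struve function `H_α`. -/
noncomputable def struveSeries (α x : ℝ) : ℝ :=
  ∑' k : ℕ, (-1 : ℝ) ^ k * (x / 2) ^ (2 * k) /
    (Real.Gamma ((k : ℝ) + 3 / 2) * Real.Gamma ((k : ℝ) + α + 3 / 2))

/-- The Struve function of order `α`. -/
noncomputable def struveH (α x : ℝ) : ℝ := (x / 2) ^ (α + 1) * struveSeries α x

open MeasureTheory Filter Topology Real
open scoped Nat

lemma ofReal_rpow_mul_one_sub_rpow {a b t : ℝ} (ht : t ∈ Icc (0 : ℝ) 1) :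
    ((t ^ (a - 1) * (1 - t) ^ (b - 1) : ℝ) : ℂ) =
      (t : ℂ) ^ ((a : ℂ) - 1) * (1 - (t : ℂ)) ^ ((b : ℂ) - 1) := by
  rw [Complex.ofReal_mul, Complex.ofReal_cpow ht.1, Complex.ofReal_cpow (sub_nonneg.2 ht.2)]
  push_cast
  rfl

lemma integrableOn_rpow_mul_one_sub_rpow {a b : ℝ} (ha : 0 < a) (hb : 0 < b) :
    IntegrableOn (fun t : ℝ => t ^ (a - 1) * (1 - t) ^ (b - 1)) (Ioo 0 1) := by
  have hC := (Complex.betaIntegral_convergent (u := a) (v := b) (by simpa) (by simpa)).1.re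
  refine (IntegrableOn.mono_set hC Ioo_subset_Ioc_self).congr_fun (fun t ht => ?_) measurableSet_Ioo
  change RCLike.re _ = _
  rw [← ofReal_rpow_mul_one_sub_rpow (Ioo_subset_Icc_self ht), RCLike.re_to_complex,
    Complex.ofReal_re]

lemma integral_rpow_mul_one_sub_rpow {a b : ℝ} (ha : 0 < a) (hb : 0 < b) :
    ∫ t in Ioo (0 : ℝ) 1, t ^ (a - 1) * (1 - t) ^ (b - 1) = Gamma a * Gamma b / Gamma (a + b) := by
  have h := Complex.betaIntegral_eq_Gamma_mul_div a b (by simpa) (by simpa)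
  rw [Complex.betaIntegral, intervalIntegral.integral_of_le zero_le_one,
    integral_Ioc_eq_integral_Ioo, ← setIntegral_congr_fun measurableSet_Ioo
      (fun t ht => ofReal_rpow_mul_one_sub_rpow (a := a) (b := b) (Ioo_subset_Icc_self ht)),
    integral_complex_ofReal, ← Complex.ofReal_add] at h
  simp only [Complex.Gamma_ofReal] at h
  exact_mod_cast h

lemma Gamma_nat_add_three_halves_mul_Gamma_nat_add_two (k : ℕ) :
    Gamma (k + 3 / 2) * Gamma (k + 2) * 2 ^ (2 * k + 2) = (2 * k + 2)! * √π := by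
  have h := Gamma_mul_Gamma_add_half ((k : ℝ) + 3 / 2)
  rw [show (k : ℝ) + 3 / 2 + 1 / 2 = k + 2 by ring,
    show 2 * ((k : ℝ) + 3 / 2) = ((2 * k + 2 : ℕ) : ℝ) + 1 by push_cast; ring,
    Gamma_nat_eq_factorial, show 1 - (((2 * k + 2 : ℕ) : ℝ) + 1) = -((2 * k + 2 : ℕ) : ℝ) by ring,
    rpow_neg two_pos.le, rpow_natCast] at h
  rw [h]
  field_simp

lemma image_sq_Ioo_zero_one : (fun t : ℝ => t ^ 2) '' Ioo 0 1 = Ioo 0 1 := by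
  ext u
  constructor
  · rintro ⟨t, ⟨ht0, ht1⟩, rfl⟩
    exact ⟨by positivity, by nlinarith⟩
  · rintro ⟨hu0, hu1⟩
    exact ⟨√u, ⟨sqrt_pos.2 hu0, (sqrt_lt' one_pos).2 (by simpa using hu1)⟩, sq_sqrt hu0.le⟩

lemma integral_Ioo_two_mul_mul_comp_sq (g : ℝ → ℝ) :
    ∫ t in Ioo (0 : ℝ) 1, 2 * t * g (t ^ 2) = ∫ u in Ioo (0 : ℝ) 1, g u := by
  have h := integral_image_eq_integral_abs_deriv_smul (measurableSet_Ioo (a := 0) (b := 1))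
    (fun t _ => (hasDerivAt_pow 2 t).hasDerivWithinAt)
    ((pow_left_strictMonoOn₀ two_ne_zero).injOn.mono fun t ht => ht.1.le) g
  rw [image_sq_Ioo_zero_one] at h
  rw [h]
  refine setIntegral_congr_fun measurableSet_Ioo fun t ht => ?_
  norm_num [abs_of_pos ht.1]

lemma integrableOn_two_mul_mul_comp_sq_iff {g : ℝ → ℝ} :
    IntegrableOn (fun t => 2 * t * g (t ^ 2)) (Ioo 0 1) ↔ IntegrableOn g (Ioo 0 1) := by
  have h := integrableOn_image_iff_integrableOn_abs_deriv_smul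
    (measurableSet_Ioo (a := 0) (b := 1)) (fun t _ => (hasDerivAt_pow 2 t).hasDerivWithinAt)
    ((pow_left_strictMonoOn₀ two_ne_zero).injOn.mono fun t ht => ht.1.le) g
  rw [image_sq_Ioo_zero_one] at h
  rw [h]
  refine integrableOn_congr_fun (fun t ht => ?_) measurableSet_Ioo
  norm_num [abs_of_pos ht.1]

lemma tendsto_integral_mul_cos_atTop {f : ℝ → ℝ} (hf : Integrable f) :
    Tendsto (fun x => ∫ t, f t * cos (x * t)) atTop (𝓝 0) := by
  have hscale : Tendsto (fun x : ℝ => x / (2 * π)) atTop (cocompact ℝ) :=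
    (tendsto_id.atTop_div_const two_pi_pos).mono_right atTop_le_cocompact
  have hRL := (Complex.continuous_re.tendsto 0).comp
    ((Real.tendsto_integral_exp_smul_cocompact fun t => (f t : ℂ)).comp hscale)
  refine (Complex.zero_re ▸ hRL).congr fun x => ?_
  have hint : Integrable fun v : ℝ => Real.fourierChar (-(v * (x / (2 * π)))) • (f v : ℂ) := by
    simpa [mul_comm] using
      (Real.fourierIntegral_convergent_iff (μ := volume) (x / (2 * π))).2 hf.ofReal
  simp only [Function.comp_apply]
  rw [← RCLike.re_to_complex, ← integral_re hint]
  refine integral_congr_ae (ae_of_all _ fun v => ?_)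
  dsimp only
  rw [Circle.smul_def, Real.fourierChar_apply, smul_eq_mul, RCLike.re_to_complex,
    Complex.re_mul_ofReal, Complex.exp_ofReal_mul_I_re,
    show 2 * π * -(v * (x / (2 * π))) = -(x * v) by field_simp, cos_neg]
  ring

lemma hasSum_one_sub_cos (y : ℝ) :
    HasSum (fun k : ℕ => (-1) ^ k * y ^ (2 * k + 2) / (2 * k + 2)!) (1 - cos y) := by
  have h := ((hasSum_nat_add_iff' 1).2 (Real.hasSum_cos y)).neg
  simp only [Finset.range_one, Finset.sum_singleton, pow_zero, mul_zero, Nat.factorial_zero,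
    Nat.cast_one, div_one, neg_sub, mul_add, mul_one, pow_succ] at h
  exact h.congr_fun fun k => by ring

lemma one_sub_cos_le_two_mul_min {x t : ℝ} (ht : |t| ≤ 1) :
    1 - cos (x * t) ≤ 2 * min 1 (x ^ 2) := by
  rcases le_total (x ^ 2) 1 with hx | hx
  · have hxt : (x * t) ^ 2 ≤ x ^ 2 := by
      rw [mul_pow]
      nlinarith [(sq_le_one_iff_abs_le_one t).2 ht, sq_nonneg x]
    rw [min_eq_right hx]
    nlinarith [one_sub_sq_div_two_le_cos (x := x * t), sq_nonneg x]
  · rw [min_eq_left hx]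
    linarith [neg_one_le_cos (x * t)]

lemma mul_sq_le_one_sub_cos {y : ℝ} (hy : |y| ≤ π) : 2 / π ^ 2 * y ^ 2 ≤ 1 - cos y := by
  linarith [cos_le_one_sub_mul_cos_sq hy]

lemma setIntegral_pos_of_ae_pos {X : Type*} [MeasurableSpace X] {μ : Measure X} {s : Set X}
    {f : X → ℝ} (hs : μ s ≠ 0) (hf : IntegrableOn f s μ) (hpos : ∀ᵐ t ∂μ.restrict s, 0 < f t) :
    0 < ∫ t in s, f t ∂μ := by
  have hsupport : Function.support f =ᵐ[μ.restrict s] univ :=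
    ae_eq_univ.2 (measure_mono_null (fun t ht => by simp_all) (ae_iff.1 hpos))
  rw [integral_pos_iff_support_of_nonneg_ae (hpos.mono fun t ht => ht.le) hf,
    measure_congr hsupport, Measure.restrict_apply_univ]
  exact pos_iff_ne_zero.2 hs

lemma exists_pos_forall_le_of_tendsto_atTop {f : ℝ → ℝ} {a l : ℝ} (hf : ContinuousOn f (Ici a))
    (hpos : ∀ x ∈ Ici a, 0 < f x) (hl : 0 < l) (hlim : Tendsto f atTop (𝓝 l)) :
    ∃ c > 0, ∀ x ∈ Ici a, c ≤ f x := by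
  obtain ⟨X, hX⟩ := eventually_atTop.1 (hlim.eventually (lt_mem_nhds (half_lt_self hl)))
  obtain ⟨x₀, hx₀, hmin⟩ := isCompact_Icc.exists_isMinOn
    (nonempty_Icc.2 (le_max_left a X)) (hf.mono Icc_subset_Ici_self)
  refine ⟨min (f x₀) (l / 2), lt_min (hpos x₀ hx₀.1) (half_pos hl), fun x hx => ?_⟩
  rcases le_total x (max a X) with h | h
  · exact (min_le_left _ _).trans (hmin ⟨hx, h⟩)
  · exact (min_le_right _ _).trans (hX x ((le_max_right _ _).trans h)).le

noncomputable def oneSubCosIntegral (w : ℝ → ℝ) (x : ℝ) : ℝ :=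
  ∫ t in Ioo (0 : ℝ) 1, w t * (1 - cos (x * t))

section Weight

variable {w : ℝ → ℝ}

lemma integrableOn_Ioo_mul_continuous (hw : IntegrableOn w (Ioo 0 1)) {g : ℝ → ℝ}
    (hg : Continuous g) : IntegrableOn (fun t => w t * g t) (Ioo 0 1) :=
  hw.mul_continuousOn_of_subset hg.continuousOn measurableSet_Ioo isCompact_Icc
    Ioo_subset_Icc_self

lemma hasSum_oneSubCosIntegral (hw : IntegrableOn w (Ioo 0 1)) (x : ℝ) :
    HasSum (fun k : ℕ => (-1) ^ k * x ^ (2 * k + 2) / (2 * k + 2)! *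
      ∫ t in Ioo (0 : ℝ) 1, w t * t ^ (2 * k + 2)) (oneSubCosIntegral w x) := by
  set c : ℕ → ℝ := fun k => (-1) ^ k * x ^ (2 * k + 2) / (2 * k + 2)!
  set F : ℕ → ℝ → ℝ := fun k t => c k * (w t * t ^ (2 * k + 2))
  have hF_int (k : ℕ) : IntegrableOn (F k) (Ioo 0 1) :=
    (integrableOn_Ioo_mul_continuous hw (continuous_pow _)).const_mul _
  have hF_norm (k : ℕ) :
      ∫ t in Ioo (0 : ℝ) 1, ‖F k t‖ ≤ |c k| * ∫ t in Ioo (0 : ℝ) 1, ‖w t‖ := by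
    rw [← integral_const_mul]
    refine setIntegral_mono_on (hF_int k).norm (hw.norm.const_mul _) measurableSet_Ioo
      fun t ht => ?_
    have htk : |t ^ (2 * k + 2)| ≤ 1 := by
      rw [abs_of_pos (by have := ht.1; positivity)]
      exact pow_le_one₀ ht.1.le ht.2.le
    simp only [F, norm_mul, Real.norm_eq_abs]
    gcongr
    exact mul_le_of_le_one_right (abs_nonneg _) htk
  have hc_summable : Summable fun k => |c k| := by
    have hinj : Function.Injective fun k : ℕ => 2 * k + 2 := fun a b h => by simp at h; omega
    refine ((Real.summable_pow_div_factorial |x|).comp_injective hinj).congr fun k => ?_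
    simp [c, abs_div, abs_mul, abs_pow]
  have h := hasSum_integral_of_summable_integral_norm hF_int
    ((hc_summable.mul_right _).of_nonneg_of_le (fun k => integral_nonneg fun _ => norm_nonneg _)
      hF_norm)
  have hpointwise (t : ℝ) : ∑' k, F k t = w t * (1 - cos (x * t)) :=
    ((hasSum_one_sub_cos (x * t)).mul_left (w t)).tsum_eq ▸
      tsum_congr fun k => by simp only [F, c]; ring
  simp only [integral_const_mul, hpointwise, F] at h
  exact h

lemma continuous_oneSubCosIntegral (hw : IntegrableOn w (Ioo 0 1)) :
    Continuous (oneSubCosIntegral w) := by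
  refine continuous_of_dominated (bound := fun t => 2 * ‖w t‖)
    (fun x => (integrableOn_Ioo_mul_continuous hw (by fun_prop)).aestronglyMeasurable)
    (fun x => ae_of_all _ fun t => ?_) (hw.norm.const_mul 2) (ae_of_all _ fun t => by fun_prop)
  rw [norm_mul, mul_comm, Real.norm_of_nonneg (sub_nonneg.2 (cos_le_one _))]
  gcongr
  linarith [neg_one_le_cos (x * t)]

lemma tendsto_oneSubCosIntegral_atTop (hw : IntegrableOn w (Ioo 0 1)) :
    Tendsto (oneSubCosIntegral w) atTop (𝓝 (∫ t in Ioo (0 : ℝ) 1, w t)) := by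
  have hRL := tendsto_integral_mul_cos_atTop ((integrable_indicator_iff measurableSet_Ioo).2 hw)
  have hsplit (x : ℝ) : oneSubCosIntegral w x =
      (∫ t in Ioo (0 : ℝ) 1, w t) - ∫ t, (Ioo 0 1).indicator w t * cos (x * t) := by
    have hind : ∫ t, (Ioo 0 1).indicator w t * cos (x * t) =
        ∫ t in Ioo (0 : ℝ) 1, w t * cos (x * t) := by
      rw [← integral_indicator measurableSet_Ioo]
      exact integral_congr_ae (ae_of_all _ fun t => by simp only [indicator_mul_left])
    rw [hind, oneSubCosIntegral, ← integral_sub hw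
      (integrableOn_Ioo_mul_continuous hw (by fun_prop))]
    simp_rw [mul_one_sub]
  have h := tendsto_const_nhds (x := ∫ t in Ioo (0 : ℝ) 1, w t) |>.sub hRL
  rw [sub_zero] at h
  exact h.congr fun x => (hsplit x).symm

lemma oneSubCosIntegral_le (hw : IntegrableOn w (Ioo 0 1)) (hw0 : ∀ t ∈ Ioo 0 1, 0 ≤ w t)
    (x : ℝ) : oneSubCosIntegral w x ≤ 2 * (∫ t in Ioo (0 : ℝ) 1, w t) * min 1 (x ^ 2) := by
  calc oneSubCosIntegral w x ≤ ∫ t in Ioo (0 : ℝ) 1, w t * (2 * min 1 (x ^ 2)) :=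
        setIntegral_mono_on (integrableOn_Ioo_mul_continuous hw (by fun_prop)) (hw.mul_const _)
          measurableSet_Ioo fun t ht => mul_le_mul_of_nonneg_left
            (one_sub_cos_le_two_mul_min (abs_le.2 ⟨by linarith [ht.1], ht.2.le⟩)) (hw0 t ht)
    _ = 2 * (∫ t in Ioo (0 : ℝ) 1, w t) * min 1 (x ^ 2) := by rw [integral_mul_const]; ring

lemma mul_sq_le_oneSubCosIntegral (hw : IntegrableOn w (Ioo 0 1))
    (hw0 : ∀ t ∈ Ioo 0 1, 0 ≤ w t) {x : ℝ} (hx : |x| ≤ π) :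
    2 / π ^ 2 * (∫ t in Ioo (0 : ℝ) 1, w t * t ^ 2) * x ^ 2 ≤ oneSubCosIntegral w x := by
  calc 2 / π ^ 2 * (∫ t in Ioo (0 : ℝ) 1, w t * t ^ 2) * x ^ 2
      = ∫ t in Ioo (0 : ℝ) 1, w t * (2 / π ^ 2 * (x * t) ^ 2) := by
        rw [← integral_const_mul, ← integral_mul_const]
        exact integral_congr_ae (ae_of_all _ fun t => by ring)
    _ ≤ oneSubCosIntegral w x := by
        refine setIntegral_mono_on (integrableOn_Ioo_mul_continuous hw (by fun_prop))
          (integrableOn_Ioo_mul_continuous hw (by fun_prop)) measurableSet_Ioo fun t ht => ?_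
        refine mul_le_mul_of_nonneg_left (mul_sq_le_one_sub_cos ?_) (hw0 t ht)
        rw [abs_mul]
        exact (mul_le_of_le_one_right (abs_nonneg x)
          (abs_le.2 ⟨by linarith [ht.1], ht.2.le⟩)).trans hx

lemma oneSubCosIntegral_pos (hw : IntegrableOn w (Ioo 0 1)) (hw0 : ∀ t ∈ Ioo 0 1, 0 < w t)
    {x : ℝ} (hx : x ≠ 0) : 0 < oneSubCosIntegral w x := by
  have hzeros : {t : ℝ | cos (x * t) = 1}.Countable := by
    refine (countable_range fun n : ℤ => n * (2 * π) / x).mono fun t ht => ?_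
    obtain ⟨n, hn⟩ := (cos_eq_one_iff (x * t)).1 ht
    exact ⟨n, by field_simp; linarith⟩
  refine setIntegral_pos_of_ae_pos (by simp) (integrableOn_Ioo_mul_continuous hw (by fun_prop)) ?_
  filter_upwards [ae_restrict_mem measurableSet_Ioo,
    ae_restrict_of_ae (measure_eq_zero_iff_ae_notMem.1 (hzeros.measure_zero volume))] with t ht htz
  exact mul_pos (hw0 t ht) (sub_pos.2 ((cos_le_one _).lt_of_ne htz))

lemma exists_pos_mul_min_le_oneSubCosIntegral (hw : IntegrableOn w (Ioo 0 1))
    (hw0 : ∀ t ∈ Ioo 0 1, 0 < w t) :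
    ∃ c > 0, ∀ x > 0, c * min 1 (x ^ 2) ≤ oneSubCosIntegral w x := by
  have hsecond : 0 < ∫ t in Ioo (0 : ℝ) 1, w t * t ^ 2 :=
    setIntegral_pos_of_ae_pos (by simp) (integrableOn_Ioo_mul_continuous hw (continuous_pow 2))
      (ae_restrict_of_forall_mem measurableSet_Ioo fun t ht => mul_pos (hw0 t ht) (pow_pos ht.1 2))
  obtain ⟨c, hc, hlarge⟩ := exists_pos_forall_le_of_tendsto_atTop (a := 1)
    (continuous_oneSubCosIntegral hw).continuousOn
    (fun x hx => oneSubCosIntegral_pos hw hw0 (by linarith [mem_Ici.1 hx]))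
    (setIntegral_pos_of_ae_pos (by simp) hw (ae_restrict_of_forall_mem measurableSet_Ioo hw0))
    (tendsto_oneSubCosIntegral_atTop hw)
  refine ⟨min (2 / π ^ 2 * ∫ t in Ioo (0 : ℝ) 1, w t * t ^ 2) c, by positivity, fun x hx => ?_⟩
  rcases le_total x 1 with hx1 | hx1
  · rw [min_eq_right (show x ^ 2 ≤ 1 by nlinarith)]
    calc min (2 / π ^ 2 * ∫ t in Ioo (0 : ℝ) 1, w t * t ^ 2) c * x ^ 2
        ≤ 2 / π ^ 2 * (∫ t in Ioo (0 : ℝ) 1, w t * t ^ 2) * x ^ 2 := by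
          gcongr
          exact min_le_left _ _
      _ ≤ oneSubCosIntegral w x := mul_sq_le_oneSubCosIntegral hw (fun t ht => (hw0 t ht).le)
          (by rw [abs_of_pos hx]; linarith [pi_gt_three])
  · rw [min_eq_left (show 1 ≤ x ^ 2 by nlinarith), mul_one]
    exact (min_le_right _ _).trans (hlarge x hx1)

end Weight

noncomputable def struveWeight (β t : ℝ) : ℝ := 2 * β * t * (1 - t ^ 2) ^ (β - 1)

lemma struveWeight_mul_pow (β t : ℝ) (n : ℕ) :
    struveWeight β t * t ^ (2 * n) =
      2 * t * (β * ((t ^ 2) ^ ((n + 1 : ℝ) - 1) * (1 - t ^ 2) ^ (β - 1))) := by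
  rw [add_sub_cancel_right, rpow_natCast, ← pow_mul, struveWeight]
  ring

section StruveWeight

variable {β : ℝ}

lemma struveWeight_pos (hβ : 0 < β) {t : ℝ} (ht : t ∈ Ioo 0 1) : 0 < struveWeight β t := by
  have : 0 < 1 - t ^ 2 := by nlinarith [ht.1, ht.2]
  have := ht.1
  unfold struveWeight
  positivity

lemma integrableOn_struveWeight (hβ : 0 < β) : IntegrableOn (struveWeight β) (Ioo 0 1) := by
  have h := integrableOn_two_mul_mul_comp_sq_iff.2
    ((integrableOn_rpow_mul_one_sub_rpow (a := ((0 : ℕ) : ℝ) + 1) (by positivity) hβ).const_mul β)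
  refine h.congr_fun (fun t _ => ?_) measurableSet_Ioo
  dsimp only
  rw [← struveWeight_mul_pow β t 0, mul_zero, pow_zero, mul_one]

lemma integral_struveWeight_mul_pow (hβ : 0 < β) (n : ℕ) :
    ∫ t in Ioo (0 : ℝ) 1, struveWeight β t * t ^ (2 * n) =
      Gamma (n + 1) * Gamma (β + 1) / Gamma (n + 1 + β) := by
  simp_rw [struveWeight_mul_pow]
  rw [integral_Ioo_two_mul_mul_comp_sq (fun u => β * (u ^ ((n + 1 : ℝ) - 1) * (1 - u) ^ (β - 1))),
    integral_const_mul, integral_rpow_mul_one_sub_rpow (by positivity) hβ, Gamma_add_one hβ.ne']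
  ring

lemma oneSubCosIntegral_struveWeight (hβ : 0 < β) (x : ℝ) :
    oneSubCosIntegral (struveWeight β) x =
      √π * Gamma (β + 1) / 4 * x ^ 2 * struveSeries (β + 1 / 2) x := by
  rw [struveSeries, ← tsum_mul_left,
    ← (hasSum_oneSubCosIntegral (integrableOn_struveWeight hβ) x).tsum_eq]
  refine tsum_congr fun k => ?_
  have hdup := Gamma_nat_add_three_halves_mul_Gamma_nat_add_two k
  have hmoment := integral_struveWeight_mul_pow hβ (k + 1)
  rw [show 2 * (k + 1) = 2 * k + 2 by ring] at hmoment
  rw [hmoment]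
  push_cast
  rw [show (k : ℝ) + 1 + 1 = k + 2 by ring, show (k : ℝ) + 2 + β = k + (β + 1 / 2) + 3 / 2 by ring]
  have hπ : 0 < √π := sqrt_pos.2 pi_pos
  have h₁ : 0 < Gamma (k + 3 / 2) := Gamma_pos_of_pos (by positivity)
  have h₂ : 0 < Gamma (k + (β + 1 / 2) + 3 / 2) := Gamma_pos_of_pos (by positivity)
  rw [eq_div_of_mul_eq hπ.ne' hdup.symm, div_pow]
  field_simp
  ring

end StruveWeight

lemma struveH_eq_rpow_mul_oneSubCosIntegral {α x : ℝ} (hα : 1 / 2 < α) (hx : 0 < x) :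
    struveH α x = x ^ (α - 1) * oneSubCosIntegral (struveWeight (α - 1 / 2)) x /
      (2 ^ (α + 1) * (√π * Gamma (α + 1 / 2) / 4)) := by
  rw [oneSubCosIntegral_struveWeight (by linarith), show α - 1 / 2 + 1 / 2 = α by ring,
    show α - 1 / 2 + 1 = α + 1 / 2 by ring, struveH, div_rpow hx.le two_pos.le,
    show α + 1 = (α - 1) + 2 by ring, rpow_add hx, rpow_two]
  have : 0 < Gamma (α + 1 / 2) := Gamma_pos_of_pos (by linarith)
  field_simp

lemma min_rpow_add_one_rpow_sub_one {x : ℝ} (hx : 0 < x) (α : ℝ) :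
    min (x ^ (α + 1)) (x ^ (α - 1)) = x ^ (α - 1) * min 1 (x ^ 2) := by
  rw [show α + 1 = (α - 1) + 2 by ring, rpow_add hx, rpow_two,
    mul_min_of_nonneg _ _ (rpow_nonneg hx.le _), mul_one, min_comm]

/-- For `α > 1/2`, `H_α(x) ≍ min{x^{α+1}, x^{α-1}}` for all `x > 0`. -/
theorem struve_two_sided_estimate (α : ℝ) (hα : 1 / 2 < α) :
    ∃ c C : ℝ, 0 < c ∧ 0 < C ∧ ∀ x ∈ Ioi (0 : ℝ),
      c * min (x ^ (α + 1)) (x ^ (α - 1)) ≤ struveH α x ∧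
        struveH α x ≤ C * min (x ^ (α + 1)) (x ^ (α - 1)) := by
  have hβ : 0 < α - 1 / 2 := by linarith
  set w := struveWeight (α - 1 / 2)
  have hw : IntegrableOn w (Ioo 0 1) := integrableOn_struveWeight hβ
  have hw_pos (t : ℝ) (ht : t ∈ Ioo 0 1) : 0 < w t := struveWeight_pos hβ ht
  obtain ⟨c, hc, hlower⟩ := exists_pos_mul_min_le_oneSubCosIntegral hw hw_pos
  have hmass : 0 < ∫ t in Ioo (0 : ℝ) 1, w t :=
    setIntegral_pos_of_ae_pos (by simp) hw (ae_restrict_of_forall_mem measurableSet_Ioo hw_pos)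
  set D := 2 ^ (α + 1) * (√π * Gamma (α + 1 / 2) / 4)
  have hD : 0 < D := by have := Gamma_pos_of_pos (by linarith : 0 < α + 1 / 2); positivity
  refine ⟨c / D, 2 * (∫ t in Ioo (0 : ℝ) 1, w t) / D, by positivity, by positivity,
    fun x (hx : 0 < x) => ?_⟩
  rw [struveH_eq_rpow_mul_oneSubCosIntegral hα hx, min_rpow_add_one_rpow_sub_one hx]
  constructor
  · calc c / D * (x ^ (α - 1) * min 1 (x ^ 2)) = x ^ (α - 1) * (c * min 1 (x ^ 2)) / D := by ring
      _ ≤ x ^ (α - 1) * oneSubCosIntegral w x / D := by gcongr; exact hlower x hx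
  · calc x ^ (α - 1) * oneSubCosIntegral w x / D
        ≤ x ^ (α - 1) * (2 * (∫ t in Ioo (0 : ℝ) 1, w t) * min 1 (x ^ 2)) / D := by
          gcongr; exact oneSubCosIntegral_le hw (fun t ht => (hw_pos t ht).le) x
      _ = 2 * (∫ t in Ioo (0 : ℝ) 1, w t) / D * (x ^ (α - 1) * min 1 (x ^ 2)) := by ring
end

section
/- Let 1 < p ≤ q < ∞ and let u, v be weights. Suppose sup_{t>0} ‖u‖_{L_q((0,t))} · ‖v^{-1}‖_{L_{p'}((0,1/t))} < ∞ and, for some n ∈ ℕ, sup_{t>0} ‖x^{-n} u‖_{L_q((t,∞))} · ‖x^{-n} v^{-1}‖_{L_{p'}((1/t,∞))} < ∞. Then sup_{t>0} (∫_0^∞ e^{-xtq} u(x)^q dx)^{1/q} · (∫_0^t v(x)^{-p'} dx)^{1/p'} < ∞. -/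
open MeasureTheory Set
open scoped ENNReal Topology

/-- The `L_p` norm (with `1 ≤ p ≤ ∞`) of a real function over a set `E ⊆ ℝ`,
as an extended nonnegative real. -/
noncomputable def Lnorm (p : ℝ≥0∞) (f : ℝ → ℝ) (E : Set ℝ) : ℝ≥0∞ :=
  if p = ∞ then essSup (fun x => ENNReal.ofReal |f x|) (volume.restrict E)
  else (∫⁻ x in E, ENNReal.ofReal |f x| ^ p.toReal) ^ (1 / p.toReal)


private lemma aux_exp_le (m : ℕ) {y c qr : ℝ} (hy : 1 ≤ y) (hc : 0 ≤ c) (hcm : c ≤ (m : ℝ))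
    (hqr : 1 ≤ qr) : Real.exp (-(y * qr)) ≤ (m.factorial : ℝ) * y ^ (-c) := by
  have hy0 : 0 < y := lt_of_lt_of_le one_pos hy
  have h1 : Real.exp (-(y * qr)) ≤ Real.exp (-y) := by
    apply Real.exp_le_exp.2
    have : y ≤ y * qr := le_mul_of_one_le_right hy0.le hqr
    linarith
  have h2 : (y : ℝ) ^ (-(m : ℝ)) ≤ y ^ (-c) :=
    Real.rpow_le_rpow_of_exponent_le hy (by linarith)
  have h3 : Real.exp (-y) ≤ (m.factorial : ℝ) * y ^ (-(m : ℝ)) := by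
    have key := Real.pow_div_factorial_le_exp (x := y) hy0.le m
    have hfac : (0:ℝ) < (m.factorial : ℝ) := by positivity
    have hym : (0:ℝ) < y ^ m := by positivity
    rw [Real.rpow_neg hy0.le, Real.rpow_natCast, Real.exp_neg]
    calc (Real.exp y)⁻¹ ≤ (y ^ m / m.factorial)⁻¹ := by
          apply inv_anti₀ (by positivity) key
      _ = (m.factorial : ℝ) * (y ^ m)⁻¹ := by rw [inv_div, div_eq_mul_inv]
  calc Real.exp (-(y*qr)) ≤ Real.exp (-y) := h1
    _ ≤ (m.factorial : ℝ) * y ^ (-(m:ℝ)) := h3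
    _ ≤ (m.factorial : ℝ) * y ^ (-c) := by
        exact mul_le_mul_of_nonneg_left h2 (by positivity)

private lemma half_point (ν : Measure ℝ) {t : ℝ} (ht : 0 < t)
    (h0 : ∀ s : ℝ, ν {s} = 0) (hfin : ν (Ioo 0 t) ≠ ⊤) (hpos : ν (Ioo 0 t) ≠ 0) :
    ∃ z, 0 < z ∧ z < t ∧ ν (Ioo 0 z) ≤ ν (Ioo 0 t) / 2 ∧ ν (Ioo 0 t) ≤ 2 * ν (Ioo 0 z) := by
  set M := ν (Ioo 0 t) with hM
  have hhalfpos : 0 < M / 2 := ENNReal.div_pos hpos (by norm_num)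
  have hhalflt : M / 2 < M := ENNReal.half_lt_self hpos hfin
  -- find a small z₀ with small measure
  have htend : Filter.Tendsto (fun k : ℕ => ν (Ioo 0 (t / (k + 1)))) Filter.atTop
      (𝓝 (ν (⋂ k : ℕ, Ioo 0 (t / (k + 1))))) := by
    apply tendsto_measure_iInter_atTop
    · exact fun k => measurableSet_Ioo.nullMeasurableSet
    · intro a b hab
      apply Ioo_subset_Ioo le_rfl
      apply div_le_div_of_nonneg_left ht.le (by positivity)
      exact_mod_cast by exact_mod_cast add_le_add_left (Nat.cast_le.2 hab) 1
    · exact ⟨0, by simpa using hfin⟩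
  have hinter : (⋂ k : ℕ, Ioo 0 (t / (k + 1))) = ∅ := by
    apply eq_empty_iff_forall_notMem.2
    intro x hx
    rw [mem_iInter] at hx
    have hx0 : 0 < x := (hx 0).1
    obtain ⟨k, hk⟩ := exists_nat_gt (t / x)
    have h1 := (hx k).2
    have : t / ((k : ℝ) + 1) < x := by
      rw [div_lt_iff₀ (by positivity)]
      rw [div_lt_iff₀ hx0] at hk
      nlinarith
    linarith
  rw [hinter] at htend
  simp only [measure_empty] at htend
  obtain ⟨k₀, hk₀⟩ := (htend.eventually_lt_const hhalfpos).exists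
  set z₀ : ℝ := t / (k₀ + 1) with hz₀
  have hz₀pos : 0 < z₀ := by positivity
  have hz₀let : z₀ ≤ t := by
    apply div_le_self ht.le
    linarith [Nat.cast_nonneg (α := ℝ) k₀]
  set S : Set ℝ := {z | z ∈ Ioc 0 t ∧ ν (Ioo 0 z) ≤ M / 2} with hS
  have hz₀S : z₀ ∈ S := ⟨⟨hz₀pos, hz₀let⟩, hk₀.le⟩
  have hSne : S.Nonempty := ⟨z₀, hz₀S⟩
  have hbdd : BddAbove S := ⟨t, fun z hz => hz.1.2⟩
  set zs := sSup S with hzs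
  have hzspos : 0 < zs := lt_of_lt_of_le hz₀pos (le_csSup hbdd hz₀S)
  have hzslet : zs ≤ t := csSup_le hSne fun z hz => hz.1.2
  -- Claim A : ν (Ioo 0 zs) ≤ M / 2
  have claimA : ν (Ioo 0 zs) ≤ M / 2 := by
    have hmono : Monotone (fun k : ℕ => Ioo (0:ℝ) (zs - zs / (k + 2))) := by
      intro a b hab
      apply Ioo_subset_Ioo le_rfl
      have : zs / ((b:ℝ) + 2) ≤ zs / ((a:ℝ) + 2) := by
        apply div_le_div_of_nonneg_left hzspos.le (by positivity)
        exact_mod_cast by exact_mod_cast add_le_add_left (Nat.cast_le.2 hab) 2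
      linarith
    have htu : Filter.Tendsto (fun k : ℕ => ν (Ioo 0 (zs - zs / (k + 2)))) Filter.atTop
        (𝓝 (ν (⋃ k : ℕ, Ioo 0 (zs - zs / (k + 2))))) :=
      tendsto_measure_iUnion_atTop hmono
    have hun : (⋃ k : ℕ, Ioo (0:ℝ) (zs - zs / (k + 2))) = Ioo 0 zs := by
      apply Subset.antisymm
      · apply iUnion_subset; intro k
        apply Ioo_subset_Ioo le_rfl
        have : 0 < zs / ((k:ℝ) + 2) := by positivity
        linarith
      · intro x hx
        obtain ⟨k, hk⟩ := exists_nat_gt (zs / (zs - x))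
        have hxz : 0 < zs - x := by linarith [hx.2]
        have hk0 : (0:ℝ) < k := lt_trans (by positivity) hk
        simp only [mem_iUnion, mem_Ioo]
        refine ⟨k, hx.1, ?_⟩
        have h1 : zs / ((k:ℝ) + 2) ≤ zs / k :=
          div_le_div_of_nonneg_left hzspos.le hk0 (by linarith)
        have h2 : zs / (k:ℝ) < zs - x := by
          rw [div_lt_iff₀ hk0]
          rw [div_lt_iff₀ hxz] at hk
          nlinarith
        linarith
    rw [hun] at htu
    apply le_of_tendsto htu
    filter_upwards with k
    have : zs - zs / ((k:ℝ) + 2) < zs := by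
      have : 0 < zs / ((k:ℝ) + 2) := by positivity
      linarith
    obtain ⟨z, hzS, hlt⟩ := exists_lt_of_lt_csSup hSne this
    exact le_trans (measure_mono (Ioo_subset_Ioo le_rfl hlt.le)) hzS.2
  -- zs < t
  have hzslt : zs < t := by
    rcases lt_or_eq_of_le hzslet with h | h
    · exact h
    · exfalso; rw [h] at claimA; exact absurd claimA (not_le.2 hhalflt)
  -- Claim B : M / 2 ≤ ν (Ioo 0 zs)
  have claimB : M / 2 ≤ ν (Ioo 0 zs) := by
    have hanti : Antitone (fun k : ℕ => Ioc (0:ℝ) (zs + (t - zs) / (k + 1))) := by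
      intro a b hab
      apply Ioc_subset_Ioc le_rfl
      have : (t - zs) / ((b:ℝ) + 1) ≤ (t - zs) / ((a:ℝ) + 1) := by
        apply div_le_div_of_nonneg_left (by linarith) (by positivity)
        exact_mod_cast by exact_mod_cast add_le_add_left (Nat.cast_le.2 hab) 1
      linarith
    have hti : Filter.Tendsto (fun k : ℕ => ν (Ioc 0 (zs + (t - zs) / (k + 1)))) Filter.atTop
        (𝓝 (ν (⋂ k : ℕ, Ioc 0 (zs + (t - zs) / (k + 1))))) := by
      apply tendsto_measure_iInter_atTop
        (fun k => measurableSet_Ioc.nullMeasurableSet) hanti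
      refine ⟨0, ?_⟩
      have h1 : Ioc (0:ℝ) (zs + (t - zs) / ((0:ℕ) + 1)) ⊆ Ioo 0 t ∪ {t} := by
        intro x hx
        have hx2 : x ≤ t := by
          have h2 := hx.2
          push_cast at h2
          linarith
        rcases lt_or_eq_of_le hx2 with h | h
        · exact Or.inl ⟨hx.1, h⟩
        · exact Or.inr (by simp [h])
      have hb : ν (Ioo 0 t ∪ {t}) ≠ ⊤ := by
        refine ne_top_of_le_ne_top ?_ (measure_union_le _ _)
        rw [h0 t, add_zero]
        exact hfin
      exact ne_top_of_le_ne_top hb (measure_mono h1)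
    have hin : (⋂ k : ℕ, Ioc (0:ℝ) (zs + (t - zs) / (k + 1))) = Ioc 0 zs := by
      apply Subset.antisymm
      · intro x hx
        simp only [mem_iInter, mem_Ioc] at hx
        refine ⟨(hx 0).1, ?_⟩
        by_contra hcon
        push_neg at hcon
        obtain ⟨k, hk⟩ := exists_nat_gt ((t - zs) / (x - zs))
        have hxz : 0 < x - zs := by linarith
        have hk0 : (0:ℝ) < k + 1 := by positivity
        have h2 : (t - zs) / ((k:ℝ) + 1) < x - zs := by
          rw [div_lt_iff₀ hk0]
          rw [div_lt_iff₀ hxz] at hk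
          nlinarith [hxz]
        have := (hx k).2
        linarith
      · intro x hx
        simp only [mem_iInter, mem_Ioc]
        intro k
        have : (0:ℝ) < (t - zs) / ((k:ℝ) + 1) := by
          have : (0:ℝ) < t - zs := by linarith
          positivity
        exact ⟨hx.1, by linarith [hx.2]⟩
    rw [hin] at hti
    have hIocIoo : ν (Ioc 0 zs) ≤ ν (Ioo 0 zs) := by
      have h1 : Ioc (0:ℝ) zs ⊆ Ioo 0 zs ∪ {zs} := by
        intro x hx
        rcases lt_or_eq_of_le hx.2 with h | h
        · exact Or.inl ⟨hx.1, h⟩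
        · exact Or.inr (by simp [h])
      refine le_trans (measure_mono h1) (le_trans (measure_union_le _ _) ?_)
      rw [h0 zs]; simp
    refine le_trans (ge_of_tendsto hti ?_) hIocIoo
    filter_upwards with k
    set y := zs + (t - zs) / ((k:ℝ) + 1) with hy
    have hy1 : zs < y := by
      have : (0:ℝ) < (t - zs) / ((k:ℝ) + 1) := by
        have : (0:ℝ) < t - zs := by linarith
        positivity
      simp only [hy]; linarith
    have hy2 : y ≤ t := by
      have : (t - zs) / ((k:ℝ) + 1) ≤ t - zs := by
        apply div_le_self (by linarith)
        linarith [Nat.cast_nonneg (α := ℝ) k]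
      simp only [hy]; linarith
    have hyS : y ∉ S := fun hmem => absurd (le_csSup hbdd hmem) (not_le.2 hy1)
    have : ¬ (ν (Ioo 0 y) ≤ M / 2) := fun hle => hyS ⟨⟨lt_trans hzspos hy1, hy2⟩, hle⟩
    exact le_trans (not_le.1 this).le (measure_mono Ioo_subset_Ioc_self)
  refine ⟨zs, hzspos, hzslt, claimA, ?_⟩
  calc M = 2 * (M / 2) := by rw [ENNReal.mul_div_cancel (by norm_num) (by norm_num)]
    _ ≤ 2 * ν (Ioo 0 zs) := mul_le_mul_right claimB 2

/-- For `1 < p ≤ q < ∞`, the two Hardy-type conditions for the Laplace transform imply the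
Bloom–Stepanov-type condition. -/
theorem laplace_conditions_imply_exponential_condition
    (p q p' : ℝ≥0∞) (hp : 1 < p) (hpq : p ≤ q) (hq : q ≠ ⊤) (hconj : 1 / p + 1 / p' = 1)
    (u v : ℝ → ℝ)
    (hu : Measurable u) (hupos : ∀ x ∈ Ioi (0 : ℝ), 0 < u x)
    (huloc : LocallyIntegrableOn u (Ioi 0))
    (hv : Measurable v) (hvpos : ∀ x ∈ Ioi (0 : ℝ), 0 < v x)
    (hvloc : LocallyIntegrableOn v (Ioi 0))
    (h₁ : (⨆ t : Ioi (0 : ℝ),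
        Lnorm q u (Ioo 0 (t : ℝ)) * Lnorm p' (fun x => (v x)⁻¹) (Ioo 0 (1 / (t : ℝ)))) < ⊤)
    (n : ℕ)
    (h₂ : (⨆ t : Ioi (0 : ℝ),
        Lnorm q (fun x => x ^ (-(n : ℝ)) * u x) (Ioi (t : ℝ)) *
          Lnorm p' (fun x => x ^ (-(n : ℝ)) * (v x)⁻¹) (Ioi (1 / (t : ℝ)))) < ⊤) :
    (⨆ t : Ioi (0 : ℝ),
      (∫⁻ x in Ioi (0 : ℝ),
          ENNReal.ofReal (Real.exp (-(x * (t : ℝ) * q.toReal))) *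
            ENNReal.ofReal (u x) ^ q.toReal) ^ (1 / q.toReal) *
        (∫⁻ x in Ioo (0 : ℝ) (t : ℝ),
          ENNReal.ofReal ((v x)⁻¹) ^ p'.toReal) ^ (1 / p'.toReal)) < ⊤ := by
  -- exponent facts
  have hp_ne_top : p ≠ ⊤ := (lt_of_le_of_lt hpq hq.lt_top).ne
  have hq1 : (1 : ℝ≥0∞) < q := lt_of_lt_of_le hp hpq
  have hqr1 : 1 < q.toReal := by
    have := (ENNReal.toReal_lt_toReal (by simp) hq).2 hq1
    simpa using this
  have hqr0 : 0 < q.toReal := lt_trans one_pos hqr1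
  have hp'_ne0 : p' ≠ 0 := by
    intro h; rw [h] at hconj; simp at hconj
  have hp'_ne_top : p' ≠ ⊤ := by
    intro h; rw [h] at hconj; simp at hconj
    rw [hconj] at hp; exact lt_irrefl _ hp
  have hpr0 : 0 < p'.toReal := ENNReal.toReal_pos hp'_ne0 hp'_ne_top
  set qr := q.toReal with hqrdef
  set pr := p'.toReal with hprdef
  -- integrands
  set gu : ℝ → ℝ≥0∞ := fun x => ENNReal.ofReal (u x) ^ qr with hgu_def
  set gv : ℝ → ℝ≥0∞ := fun y => ENNReal.ofReal ((v y)⁻¹) ^ pr with hgv_def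
  set guw : ℝ → ℝ≥0∞ := fun x => ENNReal.ofReal (x ^ (-(n : ℝ)) * u x) ^ qr with hguw_def
  set gvw : ℝ → ℝ≥0∞ := fun y => ENNReal.ofReal (y ^ (-(n : ℝ)) * (v y)⁻¹) ^ pr with hgvw_def
  have hmgu : Measurable gu := (ENNReal.measurable_ofReal.comp hu).pow measurable_const
  have hmgv : Measurable gv :=
    (ENNReal.measurable_ofReal.comp hv.inv).pow measurable_const
  have hmguw : Measurable guw :=
    (ENNReal.measurable_ofReal.comp ((measurable_id.pow measurable_const).mul hu)).pow
      measurable_const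
  have hmgvw : Measurable gvw :=
    (ENNReal.measurable_ofReal.comp ((measurable_id.pow measurable_const).mul hv.inv)).pow
      measurable_const
  set C₁ := (⨆ t : Ioi (0 : ℝ),
      Lnorm q u (Ioo 0 (t : ℝ)) * Lnorm p' (fun x => (v x)⁻¹) (Ioo 0 (1 / (t : ℝ)))) with hC₁
  set C₂ := (⨆ t : Ioi (0 : ℝ),
      Lnorm q (fun x => x ^ (-(n : ℝ)) * u x) (Ioi (t : ℝ)) *
        Lnorm p' (fun x => x ^ (-(n : ℝ)) * (v x)⁻¹) (Ioi (1 / (t : ℝ)))) with hC₂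
  -- conversion of Lnorms
  have hconv1 : ∀ s : ℝ, Lnorm q u (Ioo 0 s) = (∫⁻ x in Ioo 0 s, gu x) ^ (1/qr) := by
    intro s
    rw [Lnorm, if_neg hq]
    congr 1
    apply setLIntegral_congr_fun measurableSet_Ioo
    intro x hx
    rw [hgu_def]
    beta_reduce
    rw [abs_of_pos (hupos x hx.1)]
  have hconv2 : ∀ s : ℝ, Lnorm p' (fun x => (v x)⁻¹) (Ioo 0 s)
      = (∫⁻ y in Ioo 0 s, gv y) ^ (1/pr) := by
    intro s
    rw [Lnorm, if_neg hp'_ne_top]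
    congr 1
    apply setLIntegral_congr_fun measurableSet_Ioo
    intro x hx
    rw [hgv_def]
    beta_reduce
    rw [abs_of_pos (inv_pos.2 (hvpos x hx.1))]
  have hconv3 : ∀ s : ℝ, 0 < s → Lnorm q (fun x => x ^ (-(n : ℝ)) * u x) (Ioi s)
      = (∫⁻ x in Ioi s, guw x) ^ (1/qr) := by
    intro s hs
    rw [Lnorm, if_neg hq]
    congr 1
    apply setLIntegral_congr_fun measurableSet_Ioi
    intro x hx
    have hx0 : (0:ℝ) < x := lt_trans hs hx
    rw [hguw_def]
    beta_reduce
    rw [abs_of_pos (mul_pos (Real.rpow_pos_of_pos hx0 _) (hupos x hx0))]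
  have hconv4 : ∀ s : ℝ, 0 < s → Lnorm p' (fun x => x ^ (-(n : ℝ)) * (v x)⁻¹) (Ioi s)
      = (∫⁻ y in Ioi s, gvw y) ^ (1/pr) := by
    intro s hs
    rw [Lnorm, if_neg hp'_ne_top]
    congr 1
    apply setLIntegral_congr_fun measurableSet_Ioi
    intro x hx
    have hx0 : (0:ℝ) < x := lt_trans hs hx
    rw [hgvw_def]
    beta_reduce
    rw [abs_of_pos (mul_pos (Real.rpow_pos_of_pos hx0 _) (inv_pos.2 (hvpos x hx0)))]
  -- the two hypotheses, in integral form
  have hA : ∀ s : ℝ, 0 < s →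
      (∫⁻ x in Ioo 0 s, gu x) ^ (1/qr) * (∫⁻ y in Ioo 0 (1/s), gv y) ^ (1/pr) ≤ C₁ := by
    intro s hs
    have hle := le_iSup (fun t : Ioi (0:ℝ) =>
      Lnorm q u (Ioo 0 (t:ℝ)) * Lnorm p' (fun x => (v x)⁻¹) (Ioo 0 (1/(t:ℝ))))
      (⟨s, hs⟩ : Ioi (0:ℝ))
    simp only at hle
    rw [hconv1, hconv2] at hle
    exact hle
  have hB : ∀ s : ℝ, 0 < s →
      (∫⁻ x in Ioi s, guw x) ^ (1/qr) * (∫⁻ y in Ioi (1/s), gvw y) ^ (1/pr) ≤ C₂ := by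
    intro s hs
    have hle := le_iSup (fun t : Ioi (0:ℝ) =>
      Lnorm q (fun x => x ^ (-(n : ℝ)) * u x) (Ioi (t:ℝ)) *
        Lnorm p' (fun x => x ^ (-(n : ℝ)) * (v x)⁻¹) (Ioi (1/(t:ℝ))))
      (⟨s, hs⟩ : Ioi (0:ℝ))
    simp only at hle
    rw [hconv3 s hs, hconv4 (1/s) (by positivity)] at hle
    exact hle
  -- positivity of u-integrals
  have hUpos : ∀ s : ℝ, 0 < s → (∫⁻ x in Ioo 0 s, gu x) ≠ 0 := by
    intro s hs
    have hthis : 0 < ∫⁻ x in Ioo 0 s, gu x := by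
      rw [lintegral_pos_iff_support hmgu]
      have hsub : Ioo 0 s ⊆ Function.support gu := by
        intro x hx
        have hux : 0 < u x := hupos x hx.1
        simp only [Function.mem_support, hgu_def]
        intro hcon
        rw [ENNReal.rpow_eq_zero_iff] at hcon
        rcases hcon with ⟨h1, _⟩ | ⟨h1, _⟩
        · rw [ENNReal.ofReal_eq_zero] at h1; linarith
        · exact ENNReal.ofReal_ne_top h1
      refine lt_of_lt_of_le ?_ (measure_mono hsub)
      rw [Measure.restrict_apply_self, Real.volume_Ioo]
      simp [hs]
    exact hthis.ne'
  have hGpos : ∀ s : ℝ, 0 < s → (∫⁻ x in Ioi s, guw x) ≠ 0 := by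
    intro s hs
    have hthis : 0 < ∫⁻ x in Ioi s, guw x := by
      rw [lintegral_pos_iff_support hmguw]
      have hsub : Ioi s ⊆ Function.support guw := by
        intro x hx
        have hx0 : (0:ℝ) < x := lt_trans hs hx
        have hux : 0 < x ^ (-(n:ℝ)) * u x :=
          mul_pos (Real.rpow_pos_of_pos hx0 _) (hupos x hx0)
        simp only [Function.mem_support, hguw_def]
        intro hcon
        rw [ENNReal.rpow_eq_zero_iff] at hcon
        rcases hcon with ⟨h1, _⟩ | ⟨h1, _⟩
        · rw [ENNReal.ofReal_eq_zero] at h1; linarith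
        · exact ENNReal.ofReal_ne_top h1
      refine lt_of_lt_of_le ?_ (measure_mono hsub)
      rw [Measure.restrict_apply_self, Real.volume_Ioi]
      simp
    exact hthis.ne'
  -- finiteness of v-integrals
  have hΦfin : ∀ t : ℝ, 0 < t → (∫⁻ y in Ioo 0 t, gv y) ≠ ⊤ := by
    intro t ht
    intro htop
    have h := hA (1/t) (by positivity)
    rw [one_div_one_div, htop, ENNReal.top_rpow_of_pos (by positivity)] at h
    rw [ENNReal.mul_top] at h
    · exact absurd (lt_of_le_of_lt h h₁) (lt_irrefl _)
    · intro hzero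
      rw [ENNReal.rpow_eq_zero_iff] at hzero
      rcases hzero with ⟨h1, _⟩ | ⟨_, h2⟩
      · exact hUpos (1/t) (by positivity) h1
      · exact absurd h2 (not_lt.2 (by positivity : (0:ℝ) ≤ 1/qr))
  have hΦpos : ∀ t : ℝ, 0 < t → (∫⁻ y in Ioo 0 t, gv y) ≠ 0 := by
    intro s hs
    have hthis : 0 < ∫⁻ y in Ioo 0 s, gv y := by
      rw [lintegral_pos_iff_support hmgv]
      have hsub : Ioo 0 s ⊆ Function.support gv := by
        intro x hx
        have hux : 0 < (v x)⁻¹ := inv_pos.2 (hvpos x hx.1)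
        simp only [Function.mem_support, hgv_def]
        intro hcon
        rw [ENNReal.rpow_eq_zero_iff] at hcon
        rcases hcon with ⟨h1, _⟩ | ⟨h1, _⟩
        · rw [ENNReal.ofReal_eq_zero] at h1; linarith
        · exact ENNReal.ofReal_ne_top h1
      refine lt_of_lt_of_le ?_ (measure_mono hsub)
      rw [Measure.restrict_apply_self, Real.volume_Ioo]
      simp [hs]
    exact hthis.ne'
  -- the constant
  set m : ℕ := n * ⌈qr⌉₊ with hm
  set Kc : ℝ≥0∞ := ENNReal.ofReal (m.factorial : ℝ) with hKc
  have hbound : ∀ t : ℝ, 0 < t →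
      (∫⁻ x in Ioi (0 : ℝ),
          ENNReal.ofReal (Real.exp (-(x * t * qr))) * ENNReal.ofReal (u x) ^ qr) ^ (1/qr) *
        (∫⁻ y in Ioo (0 : ℝ) t, ENNReal.ofReal ((v y)⁻¹) ^ pr) ^ (1/pr)
      ≤ C₁ + Kc ^ (1/qr) * ((2:ℝ≥0∞) ^ (1/pr) * C₁ + (2:ℝ≥0∞) ^ (1/pr) * C₂) := by
    intro t ht
    have hinvt : (0:ℝ) < 1/t := by positivity
    set Et : ℝ → ℝ≥0∞ := fun x => ENNReal.ofReal (Real.exp (-(x * t * qr))) with hEt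
    set τ : ℝ≥0∞ := ENNReal.ofReal (t ^ (-(n:ℝ))) with hτ
    set τ' : ℝ≥0∞ := ENNReal.ofReal (t ^ ((n:ℝ))) with hτ'
    have hττ' : τ * τ' = 1 := by
      rw [hτ, hτ', ← ENNReal.ofReal_mul (by positivity), ← Real.rpow_add ht]
      simp
    -- split of the Laplace integral
    have hsets : Ioi (0:ℝ) = Ioo 0 (1/t) ∪ Ici (1/t) := by
      ext x
      simp only [mem_Ioi, mem_union, mem_Ioo, mem_Ici]
      constructor
      · intro hx
        rcases lt_or_ge x (1/t) with h | h
        · exact Or.inl ⟨hx, h⟩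
        · exact Or.inr h
      · rintro (⟨h1, _⟩ | h)
        · exact h1
        · linarith
    have hdisj : Disjoint (Ioo (0:ℝ) (1/t)) (Ici (1/t)) := by
      rw [disjoint_left]
      intro x hx1 hx2
      exact absurd hx1.2 (not_lt.2 hx2)
    have hsplit : (∫⁻ x in Ioi (0:ℝ), Et x * gu x)
        = (∫⁻ x in Ioo 0 (1/t), Et x * gu x) + (∫⁻ x in Ici (1/t), Et x * gu x) := by
      rw [hsets, lintegral_union measurableSet_Ici hdisj]
    -- head estimate
    have hIH : (∫⁻ x in Ioo 0 (1/t), Et x * gu x) ≤ ∫⁻ x in Ioo 0 (1/t), gu x := by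
      refine setLIntegral_mono hmgu fun x hx => ?_
      have h1 : Et x ≤ 1 := by
        rw [hEt]
        refine ENNReal.ofReal_le_one.2 (Real.exp_le_one_iff.2 ?_)
        have : 0 ≤ x * t * qr := by
          have := hx.1
          positivity
        linarith
      calc Et x * gu x ≤ 1 * gu x := mul_le_mul_left h1 _
        _ = gu x := one_mul _
    -- tail estimate
    have hIT : (∫⁻ x in Ici (1/t), Et x * gu x)
        ≤ (Kc * τ ^ qr) * (∫⁻ x in Ioi (1/t), guw x) := by
      have hpt : ∀ x ∈ Ici (1/t), Et x * gu x ≤ (Kc * τ ^ qr) * guw x := by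
        intro x hx
        rw [mem_Ici] at hx
        have hx0 : (0:ℝ) < x := lt_of_lt_of_le hinvt hx
        have hxt1 : (1:ℝ) ≤ x * t := (div_le_iff₀ ht).1 (by simpa [one_div] using hx)
        have hcm : (n:ℝ) * qr ≤ (m : ℝ) := by
          rw [hm]
          push_cast
          exact mul_le_mul_of_nonneg_left (Nat.le_ceil qr) (by positivity)
        have hreal : Real.exp (-(x * t * qr))
            ≤ (m.factorial : ℝ) * ((x*t) ^ (-((n:ℝ)*qr))) :=
          aux_exp_le m hxt1 (by positivity) hcm hqr1.le
        have hsplitpow : ((x*t) ^ (-((n:ℝ)*qr)))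
            = (x ^ (-(n:ℝ))) ^ qr * (t ^ (-(n:ℝ))) ^ qr := by
          calc (x*t) ^ (-((n:ℝ)*qr)) = (x*t) ^ ((-(n:ℝ))*qr) := by rw [neg_mul]
            _ = ((x*t) ^ (-(n:ℝ))) ^ qr := Real.rpow_mul (by positivity) _ _
            _ = (x ^ (-(n:ℝ)) * t ^ (-(n:ℝ))) ^ qr := by
                rw [Real.mul_rpow hx0.le ht.le]
            _ = (x ^ (-(n:ℝ))) ^ qr * (t ^ (-(n:ℝ))) ^ qr :=
                Real.mul_rpow (by positivity) (by positivity)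
        have hE : Et x ≤ Kc * (ENNReal.ofReal (x ^ (-(n:ℝ)))) ^ qr * τ ^ qr := by
          rw [hEt, hKc, hτ, ENNReal.ofReal_rpow_of_pos (Real.rpow_pos_of_pos hx0 _),
            ENNReal.ofReal_rpow_of_pos (Real.rpow_pos_of_pos ht _),
            ← ENNReal.ofReal_mul (by positivity), ← ENNReal.ofReal_mul (by positivity)]
          apply ENNReal.ofReal_le_ofReal
          rw [hsplitpow] at hreal
          exact hreal.trans (le_of_eq (mul_assoc _ _ _).symm)
        have hguws : guw x = (ENNReal.ofReal (x ^ (-(n:ℝ)))) ^ qr * gu x := by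
          rw [hguw_def, hgu_def]
          simp only
          rw [ENNReal.ofReal_mul (by positivity), ENNReal.mul_rpow_of_nonneg _ _ hqr0.le]
        calc Et x * gu x
            ≤ (Kc * (ENNReal.ofReal (x ^ (-(n:ℝ)))) ^ qr * τ ^ qr) * gu x :=
              mul_le_mul_left hE _
          _ = (Kc * τ ^ qr) * ((ENNReal.ofReal (x ^ (-(n:ℝ)))) ^ qr * gu x) := by ring
          _ = (Kc * τ ^ qr) * guw x := by rw [← hguws]
      calc (∫⁻ x in Ici (1/t), Et x * gu x)
          ≤ ∫⁻ x in Ici (1/t), (Kc * τ ^ qr) * guw x :=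
            setLIntegral_mono (by fun_prop) hpt
        _ = (Kc * τ ^ qr) * ∫⁻ x in Ici (1/t), guw x := lintegral_const_mul _ hmguw
        _ = (Kc * τ ^ qr) * ∫⁻ x in Ioi (1/t), guw x := by
            rw [setLIntegral_congr (Ioi_ae_eq_Ici (a := 1/t)).symm]
    -- the half point
    set ν := volume.withDensity gv with hν
    have hνI : ∀ s : ℝ, ν (Ioo 0 s) = ∫⁻ y in Ioo 0 s, gv y :=
      fun s => withDensity_apply _ measurableSet_Ioo
    have hν0 : ∀ s : ℝ, ν {s} = 0 := by
      intro s
      rw [hν, withDensity_apply _ (measurableSet_singleton s),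
        Measure.restrict_eq_zero.mpr (by simp), lintegral_zero_measure]
    obtain ⟨z, hz0, hzt, hz1, hz2⟩ := half_point ν ht hν0
      (by rw [hνI]; exact hΦfin t ht) (by rw [hνI]; exact hΦpos t ht)
    rw [hνI, hνI] at hz1
    rw [hνI, hνI] at hz2
    -- upper bound for Φ t via the tail Ψ
    have hR : (∫⁻ y in Ioo 0 t, gv y) ≤ 2 * (τ' ^ pr * (∫⁻ y in Ioi z, gvw y)) := by
      have hsetv : Ioo (0:ℝ) t = Ioo 0 z ∪ Ico z t := by
        ext x
        simp only [mem_Ioo, mem_union, mem_Ico]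
        constructor
        · intro hx
          rcases lt_or_ge x z with h | h
          · exact Or.inl ⟨hx.1, h⟩
          · exact Or.inr ⟨h, hx.2⟩
        · rintro (⟨h1, h2⟩ | ⟨h1, h2⟩)
          · exact ⟨h1, lt_trans h2 hzt⟩
          · exact ⟨lt_of_lt_of_le hz0 h1, h2⟩
      have hdisjv : Disjoint (Ioo (0:ℝ) z) (Ico z t) := by
        rw [disjoint_left]
        intro x hx1 hx2
        exact absurd hx1.2 (not_lt.2 hx2.1)
      have hsplitv : (∫⁻ y in Ioo 0 t, gv y)
          = (∫⁻ y in Ioo 0 z, gv y) + (∫⁻ y in Ico z t, gv y) := by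
        rw [hsetv, lintegral_union measurableSet_Ico hdisjv]
      have hhalfR : (∫⁻ y in Ioo 0 t, gv y) / 2 ≤ ∫⁻ y in Ico z t, gv y := by
        have h1 : (∫⁻ y in Ioo 0 t, gv y)
            ≤ (∫⁻ y in Ioo 0 t, gv y) / 2 + ∫⁻ y in Ico z t, gv y := by
          calc (∫⁻ y in Ioo 0 t, gv y)
              = (∫⁻ y in Ioo 0 z, gv y) + (∫⁻ y in Ico z t, gv y) := hsplitv
            _ ≤ (∫⁻ y in Ioo 0 t, gv y) / 2 + ∫⁻ y in Ico z t, gv y :=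
              add_le_add_left hz1 _
        have h2 := h1
        nth_rewrite 1 [← ENNReal.add_halves (∫⁻ y in Ioo 0 t, gv y)] at h2
        exact (ENNReal.add_le_add_iff_left
          (ENNReal.div_lt_top (hΦfin t ht) (by norm_num)).ne).1 h2
      have hRle : (∫⁻ y in Ico z t, gv y) ≤ τ' ^ pr * ∫⁻ y in Ioi z, gvw y := by
        have hpt : ∀ y ∈ Ico z t, gv y ≤ τ' ^ pr * gvw y := by
          intro y hy
          have hy0 : (0:ℝ) < y := lt_of_lt_of_le hz0 hy.1
          have h1y : 1 ≤ t ^ ((n:ℝ)) * y ^ (-(n:ℝ)) := by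
            have heq : t ^ ((n:ℝ)) * y ^ (-(n:ℝ)) = (t/y) ^ ((n:ℝ)) := by
              rw [Real.rpow_neg hy0.le, Real.div_rpow ht.le hy0.le, div_eq_mul_inv]
            rw [heq]
            calc (1:ℝ) = 1 ^ ((n:ℝ)) := (Real.one_rpow _).symm
              _ ≤ (t/y) ^ ((n:ℝ)) := Real.rpow_le_rpow (by norm_num)
                  ((one_le_div hy0).2 hy.2.le) (by positivity)
          have hvy : 0 ≤ (v y)⁻¹ := (inv_pos.2 (hvpos y hy0)).le
          have hrle : (v y)⁻¹ ≤ t ^ ((n:ℝ)) * (y ^ (-(n:ℝ)) * (v y)⁻¹) := by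
            calc (v y)⁻¹ = 1 * (v y)⁻¹ := (one_mul _).symm
              _ ≤ (t ^ ((n:ℝ)) * y ^ (-(n:ℝ))) * (v y)⁻¹ :=
                mul_le_mul_of_nonneg_right h1y hvy
              _ = t ^ ((n:ℝ)) * (y ^ (-(n:ℝ)) * (v y)⁻¹) := by ring
          rw [hgv_def, hgvw_def]
          simp only
          calc ENNReal.ofReal ((v y)⁻¹) ^ pr
              ≤ ENNReal.ofReal (t ^ ((n:ℝ)) * (y ^ (-(n:ℝ)) * (v y)⁻¹)) ^ pr :=
                ENNReal.rpow_le_rpow (ENNReal.ofReal_le_ofReal hrle) hpr0.le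
            _ = (ENNReal.ofReal (t ^ ((n:ℝ))) *
                  ENNReal.ofReal (y ^ (-(n:ℝ)) * (v y)⁻¹)) ^ pr := by
                rw [ENNReal.ofReal_mul (by positivity)]
            _ = τ' ^ pr * ENNReal.ofReal (y ^ (-(n:ℝ)) * (v y)⁻¹) ^ pr := by
                rw [ENNReal.mul_rpow_of_nonneg _ _ hpr0.le, hτ']
        calc (∫⁻ y in Ico z t, gv y) ≤ ∫⁻ y in Ico z t, τ' ^ pr * gvw y :=
              setLIntegral_mono (by fun_prop) hpt
          _ = τ' ^ pr * ∫⁻ y in Ico z t, gvw y := lintegral_const_mul _ hmgvw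
          _ ≤ τ' ^ pr * ∫⁻ y in Ici z, gvw y :=
              mul_le_mul_right (lintegral_mono_set Ico_subset_Ici_self) _
          _ = τ' ^ pr * ∫⁻ y in Ioi z, gvw y := by
              rw [setLIntegral_congr (Ioi_ae_eq_Ici (a := z)).symm]
      calc (∫⁻ y in Ioo 0 t, gv y) = 2 * ((∫⁻ y in Ioo 0 t, gv y) / 2) := by
            rw [ENNReal.mul_div_cancel (by norm_num) (by norm_num)]
        _ ≤ 2 * ((∫⁻ y in Ico z t, gv y)) := mul_le_mul_right hhalfR _
        _ ≤ 2 * (τ' ^ pr * ∫⁻ y in Ioi z, gvw y) := mul_le_mul_right hRle _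
    -- split of G (1/t)
    have h1tz : 1/t < 1/z := one_div_lt_one_div_of_lt hz0 hzt
    have hinvz : (0:ℝ) < 1/z := by positivity
    have hGs : (∫⁻ x in Ioi (1/t), guw x)
        ≤ τ' ^ qr * (∫⁻ x in Ioo 0 (1/z), gu x) + (∫⁻ x in Ioi (1/z), guw x) := by
      rw [← Ioc_union_Ioi_eq_Ioi h1tz.le,
        lintegral_union measurableSet_Ioi (Ioc_disjoint_Ioi le_rfl)]
      apply add_le_add_left
      have hpt : ∀ x ∈ Ioc (1/t) (1/z), guw x ≤ τ' ^ qr * gu x := by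
        intro x hx
        have hx0 : (0:ℝ) < x := lt_trans hinvt hx.1
        have hxn : x ^ (-(n:ℝ)) ≤ t ^ ((n:ℝ)) := by
          have hxi : x⁻¹ ≤ t := by
            rw [inv_le_comm₀ hx0 ht]
            rw [← one_div]
            exact hx.1.le
          calc x ^ (-(n:ℝ)) = (x⁻¹) ^ ((n:ℝ)) := by
                rw [Real.rpow_neg hx0.le, ← Real.inv_rpow hx0.le]
            _ ≤ t ^ ((n:ℝ)) := Real.rpow_le_rpow (by positivity) hxi (by positivity)
        have hux : 0 ≤ u x := (hupos x hx0).le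
        rw [hguw_def, hgu_def]
        simp only
        calc ENNReal.ofReal (x ^ (-(n:ℝ)) * u x) ^ qr
            ≤ ENNReal.ofReal (t ^ ((n:ℝ)) * u x) ^ qr :=
              ENNReal.rpow_le_rpow (ENNReal.ofReal_le_ofReal
                (mul_le_mul_of_nonneg_right hxn hux)) hqr0.le
          _ = (ENNReal.ofReal (t ^ ((n:ℝ))) * ENNReal.ofReal (u x)) ^ qr := by
              rw [ENNReal.ofReal_mul (by positivity)]
          _ = τ' ^ qr * ENNReal.ofReal (u x) ^ qr := by
              rw [ENNReal.mul_rpow_of_nonneg _ _ hqr0.le, hτ']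
      calc (∫⁻ x in Ioc (1/t) (1/z), guw x) ≤ ∫⁻ x in Ioc (1/t) (1/z), τ' ^ qr * gu x :=
            setLIntegral_mono (by fun_prop) hpt
        _ = τ' ^ qr * ∫⁻ x in Ioc (1/t) (1/z), gu x := lintegral_const_mul _ hmgu
        _ ≤ τ' ^ qr * ∫⁻ x in Ioc 0 (1/z), gu x :=
            mul_le_mul_right (lintegral_mono_set (Ioc_subset_Ioc_left hinvt.le)) _
        _ = τ' ^ qr * ∫⁻ x in Ioo 0 (1/z), gu x := by
            rw [setLIntegral_congr (Ioo_ae_eq_Ioc (a := (0:ℝ)) (b := 1/z)).symm]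
    -- final assembly
    have hq1r : 1/qr ≤ 1 := by
      rw [div_le_one hqr0]; exact hqr1.le
    have hrw1 : ((Kc * τ ^ qr) * (∫⁻ x in Ioi (1/t), guw x)) ^ (1/qr)
        = Kc ^ (1/qr) * τ * (∫⁻ x in Ioi (1/t), guw x) ^ (1/qr) := by
      rw [ENNReal.mul_rpow_of_nonneg _ _ (by positivity),
        ENNReal.mul_rpow_of_nonneg _ _ (by positivity), ← ENNReal.rpow_mul,
        mul_one_div_cancel hqr0.ne', ENNReal.rpow_one]
    have hGterm : (∫⁻ x in Ioi (1/t), guw x) ^ (1/qr)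
        ≤ τ' * (∫⁻ x in Ioo 0 (1/z), gu x) ^ (1/qr)
          + (∫⁻ x in Ioi (1/z), guw x) ^ (1/qr) := by
      calc (∫⁻ x in Ioi (1/t), guw x) ^ (1/qr)
          ≤ (τ' ^ qr * (∫⁻ x in Ioo 0 (1/z), gu x)
              + (∫⁻ x in Ioi (1/z), guw x)) ^ (1/qr) :=
            ENNReal.rpow_le_rpow hGs (by positivity)
        _ ≤ (τ' ^ qr * (∫⁻ x in Ioo 0 (1/z), gu x)) ^ (1/qr)
              + (∫⁻ x in Ioi (1/z), guw x) ^ (1/qr) :=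
            ENNReal.rpow_add_le_add_rpow _ _ (by positivity) hq1r
        _ = τ' * (∫⁻ x in Ioo 0 (1/z), gu x) ^ (1/qr)
              + (∫⁻ x in Ioi (1/z), guw x) ^ (1/qr) := by
            rw [ENNReal.mul_rpow_of_nonneg _ _ (by positivity), ← ENNReal.rpow_mul,
              mul_one_div_cancel hqr0.ne', ENNReal.rpow_one]
    -- term 1
    have hterm1 : (∫⁻ x in Ioo 0 (1/t), gu x) ^ (1/qr)
        * (∫⁻ y in Ioo 0 t, gv y) ^ (1/pr) ≤ C₁ := by
      have := hA (1/t) hinvt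
      rwa [one_div_one_div] at this
    -- term 2a
    have hterm2a : (∫⁻ x in Ioo 0 (1/z), gu x) ^ (1/qr)
        * (∫⁻ y in Ioo 0 t, gv y) ^ (1/pr) ≤ (2:ℝ≥0∞) ^ (1/pr) * C₁ := by
      have hAz := hA (1/z) hinvz
      rw [one_div_one_div] at hAz
      calc (∫⁻ x in Ioo 0 (1/z), gu x) ^ (1/qr) * (∫⁻ y in Ioo 0 t, gv y) ^ (1/pr)
          ≤ (∫⁻ x in Ioo 0 (1/z), gu x) ^ (1/qr)
            * (2 * (∫⁻ y in Ioo 0 z, gv y)) ^ (1/pr) :=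
            mul_le_mul_right (ENNReal.rpow_le_rpow hz2 (by positivity)) _
        _ = (2:ℝ≥0∞) ^ (1/pr) * ((∫⁻ x in Ioo 0 (1/z), gu x) ^ (1/qr)
            * (∫⁻ y in Ioo 0 z, gv y) ^ (1/pr)) := by
            rw [ENNReal.mul_rpow_of_nonneg _ _ (by positivity)]; ring
        _ ≤ (2:ℝ≥0∞) ^ (1/pr) * C₁ := mul_le_mul_right hAz _
    -- term 2b
    have hterm2b : τ * (∫⁻ x in Ioi (1/z), guw x) ^ (1/qr)
        * (∫⁻ y in Ioo 0 t, gv y) ^ (1/pr) ≤ (2:ℝ≥0∞) ^ (1/pr) * C₂ := by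
      have hBz := hB (1/z) hinvz
      rw [one_div_one_div] at hBz
      calc τ * (∫⁻ x in Ioi (1/z), guw x) ^ (1/qr) * (∫⁻ y in Ioo 0 t, gv y) ^ (1/pr)
          ≤ τ * (∫⁻ x in Ioi (1/z), guw x) ^ (1/qr)
            * (2 * (τ' ^ pr * (∫⁻ y in Ioi z, gvw y))) ^ (1/pr) :=
            mul_le_mul_right (ENNReal.rpow_le_rpow hR (by positivity)) _
        _ = (2:ℝ≥0∞) ^ (1/pr) * ((τ * τ') * ((∫⁻ x in Ioi (1/z), guw x) ^ (1/qr)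
            * (∫⁻ y in Ioi z, gvw y) ^ (1/pr))) := by
            rw [ENNReal.mul_rpow_of_nonneg _ _ (by positivity),
              ENNReal.mul_rpow_of_nonneg _ _ (by positivity), ← ENNReal.rpow_mul,
              mul_one_div_cancel hpr0.ne', ENNReal.rpow_one]
            ring
        _ = (2:ℝ≥0∞) ^ (1/pr) * ((∫⁻ x in Ioi (1/z), guw x) ^ (1/qr)
            * (∫⁻ y in Ioi z, gvw y) ^ (1/pr)) := by rw [hττ', one_mul]
        _ ≤ (2:ℝ≥0∞) ^ (1/pr) * C₂ := mul_le_mul_right hBz _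
    -- put everything together
    calc (∫⁻ x in Ioi (0:ℝ), Et x * gu x) ^ (1/qr) * (∫⁻ y in Ioo 0 t, gv y) ^ (1/pr)
        = ((∫⁻ x in Ioo 0 (1/t), Et x * gu x) + (∫⁻ x in Ici (1/t), Et x * gu x)) ^ (1/qr)
          * (∫⁻ y in Ioo 0 t, gv y) ^ (1/pr) := by rw [hsplit]
      _ ≤ ((∫⁻ x in Ioo 0 (1/t), Et x * gu x) ^ (1/qr)
            + (∫⁻ x in Ici (1/t), Et x * gu x) ^ (1/qr))
          * (∫⁻ y in Ioo 0 t, gv y) ^ (1/pr) :=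
          mul_le_mul_left (ENNReal.rpow_add_le_add_rpow _ _ (by positivity) hq1r) _
      _ ≤ ((∫⁻ x in Ioo 0 (1/t), gu x) ^ (1/qr)
            + (Kc ^ (1/qr) * τ * (∫⁻ x in Ioi (1/t), guw x) ^ (1/qr)))
          * (∫⁻ y in Ioo 0 t, gv y) ^ (1/pr) := by
          apply mul_le_mul_left
          apply add_le_add
          · exact ENNReal.rpow_le_rpow hIH (by positivity)
          · rw [← hrw1]
            exact ENNReal.rpow_le_rpow hIT (by positivity)
      _ ≤ ((∫⁻ x in Ioo 0 (1/t), gu x) ^ (1/qr)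
            + Kc ^ (1/qr) * (τ * τ' * (∫⁻ x in Ioo 0 (1/z), gu x) ^ (1/qr)
              + τ * (∫⁻ x in Ioi (1/z), guw x) ^ (1/qr)))
          * (∫⁻ y in Ioo 0 t, gv y) ^ (1/pr) := by
          apply mul_le_mul_left
          apply add_le_add_right
          calc Kc ^ (1/qr) * τ * (∫⁻ x in Ioi (1/t), guw x) ^ (1/qr)
              ≤ Kc ^ (1/qr) * τ * (τ' * (∫⁻ x in Ioo 0 (1/z), gu x) ^ (1/qr)
                + (∫⁻ x in Ioi (1/z), guw x) ^ (1/qr)) :=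
              mul_le_mul_right hGterm _
            _ = Kc ^ (1/qr) * (τ * τ' * (∫⁻ x in Ioo 0 (1/z), gu x) ^ (1/qr)
                + τ * (∫⁻ x in Ioi (1/z), guw x) ^ (1/qr)) := by ring
      _ = (∫⁻ x in Ioo 0 (1/t), gu x) ^ (1/qr) * (∫⁻ y in Ioo 0 t, gv y) ^ (1/pr)
            + Kc ^ (1/qr) * ((∫⁻ x in Ioo 0 (1/z), gu x) ^ (1/qr)
                * (∫⁻ y in Ioo 0 t, gv y) ^ (1/pr)
              + τ * (∫⁻ x in Ioi (1/z), guw x) ^ (1/qr)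
                * (∫⁻ y in Ioo 0 t, gv y) ^ (1/pr)) := by
          rw [hττ', one_mul]; ring
      _ ≤ C₁ + Kc ^ (1/qr) * ((2:ℝ≥0∞) ^ (1/pr) * C₁ + (2:ℝ≥0∞) ^ (1/pr) * C₂) := by
          apply add_le_add hterm1
          exact mul_le_mul_right (add_le_add hterm2a hterm2b) _
  refine lt_of_le_of_lt (iSup_le fun t => hbound t t.2) ?_
  have h1 : C₁ < ⊤ := h₁
  have h2 : C₂ < ⊤ := h₂
  have hKfin : Kc ^ (1/qr) < ⊤ :=
    ENNReal.rpow_lt_top_of_nonneg (by positivity) ENNReal.ofReal_ne_top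
  have h2fin : (2:ℝ≥0∞) ^ (1/pr) < ⊤ :=
    ENNReal.rpow_lt_top_of_nonneg (by positivity) (by norm_num)
  exact ENNReal.add_lt_top.2 ⟨h1, ENNReal.mul_lt_top hKfin
    (ENNReal.add_lt_top.2 ⟨ENNReal.mul_lt_top h2fin h1, ENNReal.mul_lt_top h2fin h2⟩)⟩
end

section
/- Let 1 ≤ p ≤ q ≤ ∞, β, γ ∈ ℝ, and set u(x) = x^{-β}, v(x) = x^{γ}. If sup_{t>0} ‖u‖_{L_q((0,t))} · ‖v^{-1}‖_{L_{p'}((0,1/t))} < ∞, then there exists n ∈ ℕ such that sup_{t>0} ‖x^{-n} u‖_{L_q((t,∞))} · ‖x^{-n} v^{-1}‖_{L_{p'}((1/t,∞))} < ∞. -/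
open MeasureTheory Set
open scoped ENNReal

/-!
Power weights are homogeneous: dilating a set `E ⊆ (0, ∞)` by `c > 0` multiplies
`‖x ^ a‖_{L_r(E)}` by `c ^ (a + 1/r)`. Hence the first supremum is `sup_t t ^ (s₁ - s₂) * C`,
where `s₁ = -β + 1/q`, `s₂ = -γ + 1/p'` and `C ∈ (0, ∞]` is the product of the two norms over
`(0, 1)`; it is finite only if `C < ∞` and `s₁ = s₂`. The extra factor `x ^ (-n)` lowers both
exponents by `n`, so in the second supremum the powers of `t` cancel again, leaving the product of
the two norms over `(1, ∞)`, which converge as soon as `n` is large.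
-/

lemma Lnorm_eq_eLpNorm {r : ℝ≥0∞} (hr : r ≠ 0) (f : ℝ → ℝ) (E : Set ℝ) :
    Lnorm r f E = eLpNorm f r (volume.restrict E) := by
  simp only [Lnorm, ← Real.enorm_eq_ofReal_abs]
  split_ifs with h
  · rw [h, eLpNorm_exponent_top, eLpNormEssSup]
  · rw [eLpNorm_eq_lintegral_rpow_enorm_toReal hr h]

lemma Lnorm_congr {r : ℝ≥0∞} {f g : ℝ → ℝ} {E : Set ℝ} (hE : MeasurableSet E)
    (h : EqOn f g E) : Lnorm r f E = Lnorm r g E := by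
  have hfg : (fun x => ENNReal.ofReal |f x|) =ᵐ[volume.restrict E]
      fun x => ENNReal.ofReal |g x| :=
    ae_restrict_of_forall_mem hE fun x hx => by simp only [h hx]
  unfold Lnorm
  rw [essSup_congr_ae hfg, setLIntegral_congr_fun hE fun x hx => by rw [h hx]]

/- For `r = ∞` the exponent is `a + 1 / 0 = a`, as it should be. -/
lemma Lnorm_rpow_image_mul_left {r : ℝ≥0∞} (hr : r ≠ 0) (a : ℝ) {c : ℝ} (hc : 0 < c)
    {E : Set ℝ} (hE : MeasurableSet E) (hE₀ : E ⊆ Ioi 0) :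
    Lnorm r (fun x => x ^ a) ((c * ·) '' E) =
      ENNReal.ofReal (c ^ (a + 1 / r.toReal)) * Lnorm r (fun x => x ^ a) E := by
  have hg := measurableEmbedding_mulLeft₀ hc.ne'
  have hvol : (volume : Measure ℝ) = ENNReal.ofReal c • Measure.map (c * ·) volume := by
    rw [Real.map_volume_mul_left hc.ne', smul_smul, ← ENNReal.ofReal_mul hc.le,
      abs_of_pos (inv_pos.2 hc), mul_inv_cancel₀ hc.ne', ENNReal.ofReal_one, one_smul]
  have hcomp : (fun x : ℝ => x ^ a) ∘ (c * ·) =ᵐ[volume.restrict E] c ^ a • fun x => x ^ a :=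
    ae_restrict_of_forall_mem hE fun x hx => Real.mul_rpow hc.le (le_of_lt (hE₀ hx))
  rw [Lnorm_eq_eLpNorm hr, Lnorm_eq_eLpNorm hr]
  nth_rw 1 [hvol]
  rw [Measure.restrict_smul, hg.restrict_map, hg.injective.preimage_image,
    eLpNorm_smul_measure_of_ne_zero (by simpa using hc), hg.eLpNorm_map_measure,
    eLpNorm_congr_ae hcomp, eLpNorm_const_smul, smul_eq_mul, ← mul_assoc,
    Real.enorm_eq_ofReal_abs, abs_of_pos (Real.rpow_pos_of_pos hc a),
    ENNReal.ofReal_rpow_of_pos hc, ← ENNReal.ofReal_mul (by positivity), ← Real.rpow_add hc,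
    one_div, ENNReal.toReal_inv, add_comm, one_div]

lemma Lnorm_rpow_Ioo_zero {r : ℝ≥0∞} (hr : r ≠ 0) (a : ℝ) {t : ℝ} (ht : 0 < t) :
    Lnorm r (fun x => x ^ a) (Ioo 0 t) =
      ENNReal.ofReal (t ^ (a + 1 / r.toReal)) * Lnorm r (fun x => x ^ a) (Ioo 0 1) := by
  rw [← Lnorm_rpow_image_mul_left hr a ht measurableSet_Ioo fun x hx => hx.1,
    image_mul_left_Ioo ht, mul_zero, mul_one]

lemma Lnorm_rpow_Ioi {r : ℝ≥0∞} (hr : r ≠ 0) (a : ℝ) {t : ℝ} (ht : 0 < t) :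
    Lnorm r (fun x => x ^ a) (Ioi t) =
      ENNReal.ofReal (t ^ (a + 1 / r.toReal)) * Lnorm r (fun x => x ^ a) (Ioi 1) := by
  rw [← Lnorm_rpow_image_mul_left hr a ht measurableSet_Ioi
    fun x (hx : 1 < x) => zero_lt_one.trans hx, image_mul_left_Ioi ht, mul_one]

lemma Lnorm_rpow_Ioo_zero_one_ne_zero {r : ℝ≥0∞} (hr : r ≠ 0) (a : ℝ) :
    Lnorm r (fun x => x ^ a) (Ioo 0 1) ≠ 0 := by
  rw [Lnorm_eq_eLpNorm hr, Ne, eLpNorm_eq_zero_iff (by fun_prop) hr]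
  intro h
  have hpos : ∀ᵐ x ∂volume.restrict (Ioo (0 : ℝ) 1), x ^ a ≠ 0 :=
    ae_restrict_of_forall_mem measurableSet_Ioo fun x hx => (Real.rpow_pos_of_pos hx.1 a).ne'
  have hfalse : ∀ᵐ x ∂volume.restrict (Ioo (0 : ℝ) 1), False :=
    (h.and hpos).mono fun x hx => hx.2 hx.1
  rw [Filter.eventually_false_iff_eq_bot, ae_eq_bot, Measure.restrict_eq_zero] at hfalse
  simp at hfalse

lemma Lnorm_rpow_Ioi_one_lt_top {r : ℝ≥0∞} (hr : r ≠ 0) {a : ℝ} (ha : a + 1 / r.toReal < 0) :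
    Lnorm r (fun x => x ^ a) (Ioi 1) < ⊤ := by
  rw [Lnorm_eq_eLpNorm hr]
  refine MemLp.eLpNorm_lt_top ?_
  by_cases hr_top : r = ∞
  · subst hr_top
    refine memLp_top_of_bound (by fun_prop) 1
      (ae_restrict_of_forall_mem measurableSet_Ioi fun x hx => ?_)
    simp only [ENNReal.toReal_top, div_zero, add_zero] at ha
    rw [Real.norm_of_nonneg (Real.rpow_nonneg (zero_le_one.trans hx.le) a)]
    exact Real.rpow_le_one_of_one_le_of_nonpos hx.le ha.le
  · have hr₀ : 0 < r.toReal := ENNReal.toReal_pos hr hr_top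
    rw [← integrable_norm_rpow_iff (by fun_prop) hr hr_top]
    refine (integrableOn_Ioi_rpow_of_lt (a := a * r.toReal) ?_ one_pos).congr_fun
      (fun x hx => ?_) measurableSet_Ioi
    · have := mul_lt_mul_of_pos_right ha hr₀
      rwa [add_mul, one_div, inv_mul_cancel₀ hr₀.ne', zero_mul, ← lt_sub_iff_add_lt,
        zero_sub] at this
    · rw [Real.norm_of_nonneg (Real.rpow_nonneg (zero_le_one.trans hx.le) a),
        ← Real.rpow_mul (zero_le_one.trans hx.le)]

lemma eq_zero_of_forall_rpow_le {s M : ℝ} (h : ∀ t > 0, t ^ s ≤ M) : s = 0 := by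
  by_contra hs
  have hM : 0 < M + 1 := by linarith [h 1 one_pos, Real.one_rpow s]
  have := h ((M + 1) ^ s⁻¹) (Real.rpow_pos_of_pos hM _)
  rw [← Real.rpow_mul hM.le, inv_mul_cancel₀ hs, Real.rpow_one] at this
  linarith

lemma ofReal_rpow_mul_ofReal_one_div_rpow {t : ℝ} (ht : 0 < t) (s₁ s₂ : ℝ) (A B : ℝ≥0∞) :
    ENNReal.ofReal (t ^ s₁) * A * (ENNReal.ofReal ((1 / t) ^ s₂) * B) =
      ENNReal.ofReal (t ^ (s₁ - s₂)) * (A * B) := by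
  rw [one_div, Real.inv_rpow ht.le, Real.rpow_sub ht, div_eq_mul_inv,
    ENNReal.ofReal_mul (by positivity)]
  ring

lemma exponent_eq_of_iSup_Lnorm_rpow_Ioo_lt_top {q p' : ℝ≥0∞} (hq : q ≠ 0) (hp' : p' ≠ 0)
    {β γ : ℝ}
    (h₁ : (⨆ t : Ioi (0 : ℝ),
        Lnorm q (fun x => x ^ (-β)) (Ioo 0 (t : ℝ)) *
          Lnorm p' (fun x => (x ^ γ)⁻¹) (Ioo 0 (1 / (t : ℝ)))) < ⊤) :
    -β + 1 / q.toReal = -γ + 1 / p'.toReal := by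
  set s := (-β + 1 / q.toReal) - (-γ + 1 / p'.toReal)
  set C := Lnorm q (fun x => x ^ (-β)) (Ioo 0 1) * Lnorm p' (fun x => x ^ (-γ)) (Ioo 0 1)
  have hprod (t : Ioi (0 : ℝ)) : Lnorm q (fun x => x ^ (-β)) (Ioo 0 (t : ℝ)) *
      Lnorm p' (fun x => (x ^ γ)⁻¹) (Ioo 0 (1 / (t : ℝ))) = ENNReal.ofReal ((t : ℝ) ^ s) * C := by
    have ht : (0 : ℝ) < t := t.2
    rw [Lnorm_congr measurableSet_Ioo fun x hx => (Real.rpow_neg (le_of_lt hx.1) γ).symm,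
      Lnorm_rpow_Ioo_zero hq _ ht, Lnorm_rpow_Ioo_zero hp' _ (one_div_pos.2 ht),
      ofReal_rpow_mul_ofReal_one_div_rpow ht]
  rw [iSup_congr hprod] at h₁
  set S := ⨆ t : Ioi (0 : ℝ), ENNReal.ofReal ((t : ℝ) ^ s) * C
  have hle (t : Ioi (0 : ℝ)) : ENNReal.ofReal ((t : ℝ) ^ s) * C ≤ S :=
    le_iSup (fun t : Ioi (0 : ℝ) => ENNReal.ofReal ((t : ℝ) ^ s) * C) t
  have hC₀ : C ≠ 0 :=
    mul_ne_zero (Lnorm_rpow_Ioo_zero_one_ne_zero hq _) (Lnorm_rpow_Ioo_zero_one_ne_zero hp' _)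
  have hC : C ≠ ⊤ := by simpa using ((hle ⟨1, mem_Ioi.2 one_pos⟩).trans_lt h₁).ne
  refine sub_eq_zero.1 (eq_zero_of_forall_rpow_le (M := (S / C).toReal) fun t ht => ?_)
  rw [← ENNReal.ofReal_le_iff_le_toReal (ENNReal.div_ne_top h₁.ne hC₀),
    ENNReal.le_div_iff_mul_le (.inl hC₀) (.inl hC)]
  exact hle ⟨t, ht⟩

lemma exists_iSup_Lnorm_rpow_Ioi_lt_top {q p' : ℝ≥0∞} (hq : q ≠ 0) (hp' : p' ≠ 0)
    {β γ : ℝ} (hs : -β + 1 / q.toReal = -γ + 1 / p'.toReal) :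
    ∃ n : ℕ, (⨆ t : Ioi (0 : ℝ),
        Lnorm q (fun x => x ^ (-(n : ℝ)) * x ^ (-β)) (Ioi (t : ℝ)) *
          Lnorm p' (fun x => x ^ (-(n : ℝ)) * (x ^ γ)⁻¹) (Ioi (1 / (t : ℝ)))) < ⊤ := by
  obtain ⟨n, hn⟩ := exists_nat_gt (-β + 1 / q.toReal)
  refine ⟨n, lt_of_le_of_lt (iSup_le fun t => le_of_eq ?_) (ENNReal.mul_lt_top
    (Lnorm_rpow_Ioi_one_lt_top hq (a := -n + -β) (by linarith))
    (Lnorm_rpow_Ioi_one_lt_top hp' (a := -n + -γ) (by linarith)))⟩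
  have ht : (0 : ℝ) < t := t.2
  have hβ : EqOn (fun x => x ^ (-(n : ℝ)) * x ^ (-β)) (fun x => x ^ (-n + -β)) (Ioi (t : ℝ)) :=
    fun x (hx : (t : ℝ) < x) => (Real.rpow_add (ht.trans hx) _ _).symm
  have hγ : EqOn (fun x => x ^ (-(n : ℝ)) * (x ^ γ)⁻¹) (fun x => x ^ (-n + -γ))
      (Ioi (1 / (t : ℝ))) :=
    fun x (hx : 1 / (t : ℝ) < x) => by
      have hx₀ : 0 < x := (one_div_pos.2 ht).trans hx
      simp only [← Real.rpow_neg hx₀.le, ← Real.rpow_add hx₀]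
  rw [Lnorm_congr measurableSet_Ioi hβ, Lnorm_congr measurableSet_Ioi hγ,
    Lnorm_rpow_Ioi hq _ ht, Lnorm_rpow_Ioi hp' _ (one_div_pos.2 ht),
    ofReal_rpow_mul_ofReal_one_div_rpow ht,
    show -(n : ℝ) + -β + 1 / q.toReal - (-n + -γ + 1 / p'.toReal) = 0 by linarith]
  simp

lemma ne_zero_of_one_div_add_one_div_eq_one {p p' : ℝ≥0∞} (h : 1 / p + 1 / p' = 1) :
    p ≠ 0 := by
  rintro rfl
  simp at h

theorem laplace_power_weights_first_implies_second_general
    (p q p' : ℝ≥0∞) (hpq : p ≤ q) (hconj : 1 / p + 1 / p' = 1)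
    (β γ : ℝ)
    (h₁ : (⨆ t : Ioi (0 : ℝ),
        Lnorm q (fun x => x ^ (-β)) (Ioo 0 (t : ℝ)) *
          Lnorm p' (fun x => (x ^ γ)⁻¹) (Ioo 0 (1 / (t : ℝ)))) < ⊤) :
    ∃ n : ℕ, (⨆ t : Ioi (0 : ℝ),
        Lnorm q (fun x => x ^ (-(n : ℝ)) * x ^ (-β)) (Ioi (t : ℝ)) *
          Lnorm p' (fun x => x ^ (-(n : ℝ)) * (x ^ γ)⁻¹) (Ioi (1 / (t : ℝ)))) < ⊤ := by
  have hq : q ≠ 0 := ne_bot_of_le_ne_bot (ne_zero_of_one_div_add_one_div_eq_one hconj) hpq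
  have hp' : p' ≠ 0 := ne_zero_of_one_div_add_one_div_eq_one (add_comm (1 / p) _ ▸ hconj)
  exact exists_iSup_Lnorm_rpow_Ioi_lt_top hq hp'
    (exponent_eq_of_iSup_Lnorm_rpow_Ioo_lt_top hq hp' h₁)

/-- For power weights `u(x) = x^{-β}`, `v(x) = x^{γ}` and `1 ≤ p ≤ q ≤ ∞`, the first Hardy-type
condition for the Laplace transform implies the second one (for some `n ∈ ℕ`). -/
theorem laplace_power_weights_first_implies_second
    (p q p' : ℝ≥0∞) (hp : 1 ≤ p) (hpq : p ≤ q) (hconj : 1 / p + 1 / p' = 1)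
    (β γ : ℝ)
    (h₁ : (⨆ t : Ioi (0 : ℝ),
        Lnorm q (fun x => x ^ (-β)) (Ioo 0 (t : ℝ)) *
          Lnorm p' (fun x => (x ^ γ)⁻¹) (Ioo 0 (1 / (t : ℝ)))) < ⊤) :
    ∃ n : ℕ, (⨆ t : Ioi (0 : ℝ),
        Lnorm q (fun x => x ^ (-(n : ℝ)) * x ^ (-β)) (Ioi (t : ℝ)) *
          Lnorm p' (fun x => x ^ (-(n : ℝ)) * (x ^ γ)⁻¹) (Ioi (1 / (t : ℝ)))) < ⊤ :=
  laplace_power_weights_first_implies_second_general p q p' hpq hconj β γ h₁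
end

section
/- Let β, γ ∈ ℝ. There exists C > 0 such that ‖x^{-β} 𝓛f(x)‖_{L_∞} ≤ C ‖x^{γ} f(x)‖_{L_1} holds for every f with ‖x^{γ}f‖_{L_1} < ∞ if and only if β = γ and β ≤ 0. -/
/-!
Sufficiency: for `β ≤ 0` the kernel obeys `y^{-β} e^{-xy} ≤ ⌈-β⌉! x^β`, because `t^{-β} e^{-t}`
is bounded on `(0, ∞)`; integrating against `|f|` bounds `y^{-β} |𝓛f(y)|` by `⌈-β⌉! ‖x^β f‖₁`.

Necessity: testing the inequality on the indicator of `(a, 2a)` and looking at `y ∈ (δ, 2δ)`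
gives `δ^{-β} e^{-4aδ} ≲ a^γ`. With `δ = 1/a` this bounds `a^{β-γ}` on all of `(0, ∞)`,
which forces `β = γ`; with `a = 1` it bounds `δ^{-β}` as `δ → 0⁺`, which forces `β ≤ 0`.
-/

open MeasureTheory Set
open scoped ENNReal

open Real Filter Topology
open scoped NNReal Nat

lemma Lnorm_one (f : ℝ → ℝ) (E : Set ℝ) :
    Lnorm 1 f E = ∫⁻ x in E, ENNReal.ofReal |f x| := by simp [Lnorm]

lemma Lnorm_top (f : ℝ → ℝ) (E : Set ℝ) :
    Lnorm ⊤ f E = essSup (fun x => ENNReal.ofReal |f x|) (volume.restrict E) := by simp [Lnorm]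

lemma le_essSup_of_forall_mem_le {α : Type*} [MeasurableSpace α] {μ : Measure α}
    {g : α → ℝ≥0∞} {s : Set α} {c : ℝ≥0∞} (hs : MeasurableSet s) (hμs : μ s ≠ 0)
    (h : ∀ x ∈ s, c ≤ g x) : c ≤ essSup g μ :=
  calc c = essSup (fun _ => c) (μ.restrict s) :=
        (essSup_const c (Measure.restrict_eq_zero.not.mpr hμs)).symm
    _ ≤ essSup g (μ.restrict s) := essSup_mono_ae (ae_restrict_of_forall_mem hs h)
    _ ≤ essSup g μ := essSup_mono_measure' Measure.restrict_le_self

lemma Lnorm_top_integral_le {s : Set ℝ} (hs : MeasurableSet s) {k : ℝ → ℝ → ℝ} {w v : ℝ → ℝ}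
    {c : ℝ≥0} (hk : ∀ x ∈ s, ∀ y ∈ s, |w y * k x y| ≤ c * |v x|) (f : ℝ → ℝ) :
    Lnorm ⊤ (fun y => w y * ∫ x in s, f x * k x y) s ≤ c * Lnorm 1 (fun x => v x * f x) s := by
  rw [Lnorm_top, Lnorm_one]
  refine essSup_le_of_ae_le _ (ae_restrict_of_forall_mem hs fun y hy => ?_)
  calc ENNReal.ofReal |w y * ∫ x in s, f x * k x y|
      = ‖∫ x in s, w y * (f x * k x y)‖ₑ := by
        rw [integral_const_mul, Real.enorm_eq_ofReal_abs]
    _ ≤ ∫⁻ x in s, ‖w y * (f x * k x y)‖ₑ := enorm_integral_le_lintegral_enorm _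
    _ ≤ ∫⁻ x in s, c * ENNReal.ofReal |v x * f x| := by
        refine lintegral_mono_ae (ae_restrict_of_forall_mem hs fun x hx => ?_)
        rw [Real.enorm_eq_ofReal_abs, ← ENNReal.ofReal_coe_nnreal,
          ← ENNReal.ofReal_mul c.coe_nonneg]
        refine ENNReal.ofReal_le_ofReal ?_
        calc |w y * (f x * k x y)| = |w y * k x y| * |f x| := by simp only [abs_mul]; ring
          _ ≤ c * |v x| * |f x| := by gcongr; exact hk x hx y hy
          _ = c * |v x * f x| := by rw [abs_mul]; ring
    _ = c * ∫⁻ x in s, ENNReal.ofReal |v x * f x| := lintegral_const_mul' _ _ ENNReal.coe_ne_top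

lemma rpow_le_max_one_pow {t α : ℝ} {n : ℕ} (ht : 0 ≤ t) (hα : 0 ≤ α) (hαn : α ≤ n) :
    t ^ α ≤ max 1 (t ^ n) := by
  rcases le_total t 1 with h | h
  · exact (rpow_le_one ht h hα).trans (le_max_left _ _)
  · rw [← rpow_natCast]
    exact (rpow_le_rpow_of_exponent_le h hαn).trans (le_max_right _ _)

lemma rpow_mul_exp_neg_le_factorial {t α : ℝ} (ht : 0 ≤ t) (hα : 0 ≤ α) :
    t ^ α * exp (-t) ≤ (⌈α⌉₊)! := by
  set n := ⌈α⌉₊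
  have hfac : (1 : ℝ) ≤ n ! := by exact_mod_cast n.factorial_pos
  have hexp : max 1 (t ^ n) ≤ n ! * exp t := by
    refine max_le ?_ ?_
    · nlinarith [one_le_exp ht]
    · rw [← div_le_iff₀' (by positivity)]
      exact pow_div_factorial_le_exp t ht n
  rw [← le_div_iff₀ (exp_pos _), exp_neg, div_inv_eq_mul]
  exact (rpow_le_max_one_pow ht hα (Nat.le_ceil α)).trans hexp

lemma rpow_neg_mul_exp_le {β x y : ℝ} (hβ : β ≤ 0) (hx : 0 < x) (hy : 0 < y) :
    y ^ (-β) * exp (-(x * y)) ≤ (⌈-β⌉₊)! * x ^ β := by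
  have h := rpow_mul_exp_neg_le_factorial (mul_pos hx hy).le (neg_nonneg.mpr hβ)
  rw [mul_rpow hx.le hy.le, rpow_neg hx.le, mul_assoc, inv_mul_le_iff₀ (rpow_pos_of_pos hx _)] at h
  linarith

lemma rpow_le_rpow_abs_of_mem_Icc {s t γ : ℝ} (hs : s ∈ Icc 1 t) : s ^ γ ≤ t ^ |γ| :=
  (rpow_le_rpow_of_exponent_le hs.1 (le_abs_self γ)).trans
    (rpow_le_rpow (zero_le_one.trans hs.1) hs.2 (abs_nonneg γ))

lemma rpow_neg_abs_le_rpow_of_mem_Icc {s t γ : ℝ} (hs : s ∈ Icc 1 t) : t ^ (-|γ|) ≤ s ^ γ :=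
  (rpow_le_rpow_of_nonpos (one_pos.trans_le hs.1) hs.2 (neg_nonpos.mpr (abs_nonneg γ))).trans
    (rpow_le_rpow_of_exponent_le hs.1 (neg_abs_le γ))

lemma nonneg_of_forall_rpow_le {p K : ℝ} (h : ∀ a ∈ Ioo (0 : ℝ) 1, a ^ p ≤ K) : 0 ≤ p := by
  by_contra! hp
  obtain ⟨a, hKa, ha⟩ := ((tendsto_rpow_neg_nhdsGT_zero hp).eventually_gt_atTop K).and
    (Ioo_mem_nhdsGT one_pos) |>.exists
  exact (h a ha).not_gt hKa

lemma eq_zero_of_forall_rpow_le_s18 {p K : ℝ} (h : ∀ a, 0 < a → a ^ p ≤ K) : p = 0 := by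
  refine le_antisymm (neg_nonneg.mp (nonneg_of_forall_rpow_le (K := K) fun a ha => ?_))
    (nonneg_of_forall_rpow_le fun a ha => h a ha.1)
  rw [rpow_neg ha.1.le, ← inv_rpow ha.1.le]
  exact h _ (inv_pos.mpr ha.1)

lemma indicator_one_mul {α : Type*} (s : Set α) (g : α → ℝ) :
    (fun x => s.indicator 1 x * g x) = s.indicator g := by
  ext x
  rw [← indicator_mul_left, Pi.one_def]
  simp only [one_mul]

lemma Lnorm_one_mul_indicator_le {g : ℝ → ℝ} {s : Set ℝ} (hs : MeasurableSet s) {M : ℝ}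
    (hg : ∀ x ∈ s, |g x| ≤ M) (E : Set ℝ) :
    Lnorm 1 (fun x => g x * s.indicator 1 x) E ≤ ENNReal.ofReal M * volume s := by
  rw [Lnorm_one]
  calc ∫⁻ x in E, ENNReal.ofReal |g x * s.indicator 1 x|
      ≤ ∫⁻ x, s.indicator (fun _ => ENNReal.ofReal M) x := by
        refine (setLIntegral_le_lintegral _ _).trans (lintegral_mono fun x => ?_)
        by_cases hx : x ∈ s
        · simpa [hx] using ENNReal.ofReal_le_ofReal (hg x hx)
        · simp [hx]
    _ = ENNReal.ofReal M * volume s := lintegral_indicator_const hs _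

lemma integrableOn_indicator_Ioo_mul_exp (a b y : ℝ) :
    IntegrableOn (fun x => (Ioo a b).indicator 1 x * exp (-(x * y))) (Ioi 0) := by
  rw [indicator_one_mul]
  exact ((continuous_exp.comp (by fun_prop)).integrableOn_Icc.mono_set Ioo_subset_Icc_self
    |>.integrable_indicator measurableSet_Ioo).integrableOn

lemma le_integral_indicator_Ioo_mul_exp {a b y : ℝ} (ha : 0 ≤ a) (hab : a ≤ b) (hy : 0 ≤ y) :
    (b - a) * exp (-(b * y)) ≤ ∫ x in Ioi 0, (Ioo a b).indicator 1 x * exp (-(x * y)) := by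
  rw [indicator_one_mul, setIntegral_indicator measurableSet_Ioo,
    inter_eq_right.mpr (Ioo_subset_Ioi_self.trans (Ioi_subset_Ioi ha))]
  have h := setIntegral_ge_of_const_le (μ := volume) measurableSet_Ioo
    (by simp [Real.volume_Ioo]) (fun x (hx : x ∈ Ioo a b) => exp_le_exp.mpr
      (neg_le_neg (mul_le_mul_of_nonneg_right hx.2.le hy)))
    ((continuous_exp.comp (by fun_prop)).integrableOn_Icc.mono_set Ioo_subset_Icc_self)
  rwa [Real.volume_real_Ioo_of_le hab, smul_eq_mul] at h

def LaplaceWeightedBound (β γ : ℝ) (C : ℝ≥0∞) : Prop :=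
  ∀ f : ℝ → ℝ, Measurable f →
    Lnorm 1 (fun x => x ^ γ * f x) (Ioi 0) < ⊤ →
    (∀ y ∈ Ioi (0 : ℝ), IntegrableOn (fun x => f x * Real.exp (-(x * y))) (Ioi 0)) →
    Lnorm ⊤ (fun y => y ^ (-β) * ∫ x in Ioi (0 : ℝ), f x * Real.exp (-(x * y))) (Ioi 0)
      ≤ C * Lnorm 1 (fun x => x ^ γ * f x) (Ioi 0)

lemma laplaceWeightedBound_factorial {β : ℝ} (hβ : β ≤ 0) :
    LaplaceWeightedBound β β ((⌈-β⌉₊)! : ℝ≥0) := fun f _ _ _ =>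
  Lnorm_top_integral_le measurableSet_Ioi (fun x hx y hy => by
    rw [abs_of_nonneg (mul_pos (rpow_pos_of_pos hy _) (exp_pos _)).le,
      abs_of_nonneg (rpow_nonneg (le_of_lt hx) _), NNReal.coe_natCast]
    exact rpow_neg_mul_exp_le hβ hx hy) f

namespace LaplaceWeightedBound

variable {β γ : ℝ} {C : ℝ≥0∞}

lemma le_of_indicator_Ioo (h : LaplaceWeightedBound β γ C) (hC : C ≠ ⊤) {a b c d m M : ℝ}
    (ha : 0 ≤ a) (hab : a < b) (hc : 0 < c) (hcd : c < d) (hM : ∀ x ∈ Ioo a b, x ^ γ ≤ M)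
    (hm : ∀ y ∈ Ioo c d, m ≤ y ^ (-β)) :
    m * exp (-(b * d)) ≤ C.toReal * M := by
  set f := (Ioo a b).indicator (1 : ℝ → ℝ)
  have hab_pos : Ioo a b ⊆ Ioi 0 := Ioo_subset_Ioi_self.trans (Ioi_subset_Ioi ha)
  have hcd_pos : Ioo c d ⊆ Ioi 0 := Ioo_subset_Ioi_self.trans (Ioi_subset_Ioi hc.le)
  obtain ⟨x₀, hx₀⟩ := nonempty_Ioo.mpr hab
  have hM0 : 0 ≤ M := (rpow_nonneg (hab_pos hx₀).le _).trans (hM x₀ hx₀)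
  have hL1 : Lnorm 1 (fun x => x ^ γ * f x) (Ioi 0) ≤ ENNReal.ofReal (M * (b - a)) := by
    refine (Lnorm_one_mul_indicator_le (M := M) measurableSet_Ioo (fun x hx => ?_) _).trans_eq ?_
    · rw [abs_of_nonneg (rpow_nonneg (hab_pos hx).le _)]
      exact hM x hx
    · rw [Real.volume_Ioo, ENNReal.ofReal_mul hM0]
  have hLinf : ENNReal.ofReal (m * ((b - a) * exp (-(b * d)))) ≤
      Lnorm ⊤ (fun y => y ^ (-β) * ∫ x in Ioi 0, f x * exp (-(x * y))) (Ioi 0) := by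
    rw [Lnorm_top]
    refine le_essSup_of_forall_mem_le (s := Ioo c d) measurableSet_Ioo ?_ fun y hy => ?_
    · rw [Measure.restrict_apply measurableSet_Ioo, inter_eq_left.mpr hcd_pos, Real.volume_Ioo]
      exact (ENNReal.ofReal_pos.mpr (sub_pos.mpr hcd)).ne'
    · have hexp : (b - a) * exp (-(b * d)) ≤ (b - a) * exp (-(b * y)) := by
        gcongr
        · linarith
        · exact hy.2.le
      refine ENNReal.ofReal_le_ofReal (le_abs.mpr (Or.inl ?_))
      exact mul_le_mul (hm y hy) (hexp.trans (le_integral_indicator_Ioo_mul_exp ha hab.le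
        (hcd_pos hy).le)) (by positivity) (rpow_nonneg (hcd_pos hy).le _)
  have hbound : ENNReal.ofReal (m * ((b - a) * exp (-(b * d)))) ≤
      C * ENNReal.ofReal (M * (b - a)) :=
    hLinf.trans <| (h f (measurable_one.indicator measurableSet_Ioo)
      (hL1.trans_lt ENNReal.ofReal_lt_top)
      fun y _ => integrableOn_indicator_Ioo_mul_exp a b y).trans (by gcongr)
  rw [← ENNReal.ofReal_toReal hC, ← ENNReal.ofReal_mul ENNReal.toReal_nonneg,
    ENNReal.ofReal_le_ofReal_iff (by have := sub_pos.mpr hab; positivity)] at hbound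
  refine le_of_mul_le_mul_right ?_ (sub_pos.mpr hab)
  linarith

lemma exists_rpow_neg_mul_exp_le (h : LaplaceWeightedBound β γ C) (hC : C ≠ ⊤) :
    ∃ K, ∀ a δ : ℝ, 0 < a → 0 < δ → δ ^ (-β) * exp (-(4 * (a * δ))) ≤ K * a ^ γ := by
  refine ⟨C.toReal * 2 ^ |γ| / 2 ^ (-|β|), fun a δ ha hδ => ?_⟩
  have hM : ∀ x ∈ Ioo a (2 * a), x ^ γ ≤ 2 ^ |γ| * a ^ γ := fun x hx => by
    have hx' : x / a ∈ Icc 1 2 := ⟨(one_le_div ha).mpr hx.1.le, (div_le_iff₀ ha).mpr hx.2.le⟩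
    rw [← mul_div_cancel₀ x ha.ne', mul_rpow ha.le (zero_le_one.trans hx'.1), mul_comm]
    gcongr
    exact rpow_le_rpow_abs_of_mem_Icc hx'
  have hm : ∀ y ∈ Ioo δ (2 * δ), 2 ^ (-|β|) * δ ^ (-β) ≤ y ^ (-β) := fun y hy => by
    have hy' : y / δ ∈ Icc 1 2 := ⟨(one_le_div hδ).mpr hy.1.le, (div_le_iff₀ hδ).mpr hy.2.le⟩
    rw [← mul_div_cancel₀ y hδ.ne', mul_rpow hδ.le (zero_le_one.trans hy'.1), mul_comm]
    gcongr
    simpa only [abs_neg] using rpow_neg_abs_le_rpow_of_mem_Icc (γ := -β) hy'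
  have hbox := h.le_of_indicator_Ioo hC ha.le (by linarith) hδ (by linarith) hM hm
  rw [show 2 * a * (2 * δ) = 4 * (a * δ) by ring] at hbox
  rw [div_mul_eq_mul_div, le_div_iff₀ (by positivity)]
  linarith

lemma exists_rpow_sub_le (h : LaplaceWeightedBound β γ C) (hC : C ≠ ⊤) :
    ∃ K, ∀ a : ℝ, 0 < a → a ^ (β - γ) ≤ K := by
  obtain ⟨K, hK⟩ := h.exists_rpow_neg_mul_exp_le hC
  refine ⟨K * exp 4, fun a ha => ?_⟩
  have hKa := hK a a⁻¹ ha (inv_pos.mpr ha)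
  rw [inv_rpow ha.le, rpow_neg ha.le, inv_inv, mul_inv_cancel₀ ha.ne', mul_one, exp_neg,
    mul_inv_le_iff₀ (exp_pos 4)] at hKa
  rw [rpow_sub ha, div_le_iff₀ (rpow_pos_of_pos ha γ)]
  linarith

lemma exists_rpow_neg_le (h : LaplaceWeightedBound β γ C) (hC : C ≠ ⊤) :
    ∃ K, ∀ δ ∈ Ioo (0 : ℝ) 1, δ ^ (-β) ≤ K := by
  obtain ⟨K, hK⟩ := h.exists_rpow_neg_mul_exp_le hC
  refine ⟨K * exp 4, fun δ hδ => ?_⟩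
  have hKδ := hK 1 δ one_pos hδ.1
  rw [one_mul, one_rpow, mul_one, exp_neg, mul_inv_le_iff₀ (exp_pos _)] at hKδ
  have hK0 : 0 ≤ K := by nlinarith [rpow_pos_of_pos hδ.1 (-β), exp_pos (4 * δ)]
  calc δ ^ (-β) ≤ K * exp (4 * δ) := hKδ
    _ ≤ K * exp 4 := by gcongr; linarith [hδ.2]

end LaplaceWeightedBound

/-- Characterization of the power-weighted inequality
`‖x^{-β} 𝓛f‖_{L_∞} ≤ C ‖x^{γ} f‖_{L_1}` for the Laplace transform:
it holds iff `β = γ` and `β ≤ 0`. -/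
theorem laplace_power_weights_characterization_one_infinity (β γ : ℝ) :
    (∃ C : ℝ≥0∞, 0 < C ∧ C ≠ ⊤ ∧ ∀ f : ℝ → ℝ, Measurable f →
        Lnorm 1 (fun x => x ^ γ * f x) (Ioi 0) < ⊤ →
        (∀ y ∈ Ioi (0 : ℝ), IntegrableOn (fun x => f x * Real.exp (-(x * y))) (Ioi 0)) →
        Lnorm ⊤ (fun y => y ^ (-β) * ∫ x in Ioi (0 : ℝ), f x * Real.exp (-(x * y))) (Ioi 0)
          ≤ C * Lnorm 1 (fun x => x ^ γ * f x) (Ioi 0)) ↔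
      (β = γ ∧ β ≤ 0) := by
  constructor
  · rintro ⟨C, -, hC, h⟩
    obtain ⟨K, hK⟩ := LaplaceWeightedBound.exists_rpow_sub_le h hC
    obtain ⟨K', hK'⟩ := LaplaceWeightedBound.exists_rpow_neg_le h hC
    exact ⟨sub_eq_zero.mp (eq_zero_of_forall_rpow_le_s18 hK),
      neg_nonneg.mp (nonneg_of_forall_rpow_le hK')⟩
  · rintro ⟨rfl, hβ⟩
    exact ⟨_, by exact_mod_cast (⌈-β⌉₊).factorial_pos, ENNReal.coe_ne_top,
      laplaceWeightedBound_factorial hβ⟩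
end
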